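/- arXiv:1502.02748 — 4 statements merged into one kernel-verified Lean document; each statement's English description precedes it below -/
import Mathlib

section
/- Let L be a non-crossing partition of [n]. For any two distinct blocks B and B' of L, exactly one of the following four relations holds: B < B', B' < B, B <_L B', or B' <_L B. -/
open scoped TensorProduct

/-- The data of a collection of blocks (finite sets of natural numbers). -/
abbrev PartData : Type := Finset (Finset ℕ)

/-- The non-crossing condition on a collection of blocks: there are no
`p₁ < q₁ < p₂ < q₂` with `p₁, p₂` in one block and `q₁, q₂` in a different block. -/
def NoCrossing (P : PartData) : Prop :=
  ∀ B ∈ P, ∀ B' ∈ P, B ≠ B' →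
    ∀ p₁ ∈ B, ∀ p₂ ∈ B, ∀ q₁ ∈ B', ∀ q₂ ∈ B',
      ¬ (p₁ < q₁ ∧ q₁ < p₂ ∧ p₂ < q₂)

instance (P : PartData) : Decidable (NoCrossing P) := by
  unfold NoCrossing; exact inferInstance

/-- `NestedIn B B'` is the relation `B <_L B'`: every element of `B` lies strictly
between `min B'` and `max B'`. -/
def NestedIn (B B' : Finset ℕ) : Prop :=
  ∀ m ∈ B, (∃ a ∈ B', a < m) ∧ (∃ b ∈ B', m < b)

instance (B B' : Finset ℕ) : Decidable (NestedIn B B') := by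
  unfold NestedIn; exact inferInstance

/-- Admissibility of a decomposition of the blocks into `Q` and `U`:
no block of `Q` is `<_L` any block of `U`. -/
def Adm (Q U : PartData) : Prop := ∀ q ∈ Q, ∀ u ∈ U, ¬ NestedIn q u

instance (Q U : PartData) : Decidable (Adm Q U) := by
  unfold Adm; exact inferInstance

/-- `P` is a non-crossing set partition of `{0, 1, …, n-1}`. -/
def IsNCP (n : ℕ) (P : PartData) : Prop :=
  ∅ ∉ P ∧ (∀ B ∈ P, ∀ B' ∈ P, B ≠ B' → Disjoint B B') ∧
    P.sup id = Finset.range n ∧ NoCrossing P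

instance (n : ℕ) (P : PartData) : Decidable (IsNCP n P) := by
  unfold IsNCP; exact inferInstance

/-- The rank of `x` in `S` (the standardization map: the unique increasing
bijection from `S` onto `{0, …, |S|-1}`). -/
def rk (S : Finset ℕ) (x : ℕ) : ℕ := (S.filter (· < x)).card

/-- Standardization of a collection of blocks, via the rank map of its ground set. -/
def stdParts (P : PartData) : PartData := P.image fun B => B.image (rk (P.sup id))

/-- The connected component of `x` in `T` relative to the separating set `S`. -/
def compOf (S T : Finset ℕ) (x : ℕ) : Finset ℕ :=
  T.filter fun y => ∀ s ∈ S, ¬ (min x y < s ∧ s < max x y)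

/-- The ordered list of connected components of `T` relative to the separating set `S`. -/
def comps (S T : Finset ℕ) : List (Finset ℕ) :=
  ((T.sort (· ≤ ·)).map (compOf S T)).dedup

/-- The finite set of all non-crossing partitions of `{0, …, n-1}`. -/
def NCset (n : ℕ) : Finset PartData :=
  ((Finset.range n).powerset.powerset).filter (IsNCP n)

/-- `BlocksLT B B'` is the relation `B < B'`: every element of `B` is smaller than
every element of `B'`. -/
def BlocksLT (B B' : Finset ℕ) : Prop := ∀ a ∈ B, ∀ b ∈ B', a < b

/-!
Order two disjoint nonempty blocks so that `min B < min B'`. If `max B < min B'` then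
`B < B'`. Otherwise `min B' < max B`, and an element `m ∈ B'` above `max B` would give the
crossing `min B < min B' < max B < m`; so all of `B'` lies strictly between `min B` and
`max B`, i.e. `B' <_L B`. The four relations are pairwise incompatible for nonempty blocks.
-/

namespace BlocksLT

variable {B B' : Finset ℕ}

lemma not_blocksLT_symm (h : BlocksLT B B') (hB : B.Nonempty) (hB' : B'.Nonempty) :
    ¬ BlocksLT B' B := by
  obtain ⟨a, ha⟩ := hB
  obtain ⟨b, hb⟩ := hB'
  exact fun h' => (h a ha b hb).asymm (h' b hb a ha)

lemma not_nestedIn (h : BlocksLT B B') (hB : B.Nonempty) : ¬ NestedIn B B' := by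
  obtain ⟨m, hm⟩ := hB
  intro hn
  obtain ⟨a, ha, ham⟩ := (hn m hm).1
  exact (h m hm a ha).asymm ham

lemma not_nestedIn_symm (h : BlocksLT B B') (hB' : B'.Nonempty) : ¬ NestedIn B' B := by
  obtain ⟨m, hm⟩ := hB'
  intro hn
  obtain ⟨b, hb, hmb⟩ := (hn m hm).2
  exact (h b hb m hm).asymm hmb

end BlocksLT

lemma NestedIn.not_nestedIn_symm {B B' : Finset ℕ} (h : NestedIn B B') (hB : B.Nonempty) :
    ¬ NestedIn B' B := by
  intro h'
  obtain ⟨b, hb, hmb⟩ := (h (B.max' hB) (B.max'_mem hB)).2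
  obtain ⟨c, hc, hbc⟩ := (h' b hb).2
  exact (hmb.trans hbc).not_ge (B.le_max' c hc)

lemma blocksLT_or_nestedIn_of_min'_lt {B B' : Finset ℕ} (hB : B.Nonempty) (hB' : B'.Nonempty)
    (hdisj : Disjoint B B')
    (hnc : ∀ p₁ ∈ B, ∀ p₂ ∈ B, ∀ q₁ ∈ B', ∀ q₂ ∈ B', ¬ (p₁ < q₁ ∧ q₁ < p₂ ∧ p₂ < q₂))
    (hmin : B.min' hB < B'.min' hB') :
    BlocksLT B B' ∨ NestedIn B' B := by
  by_cases hsep : B.max' hB < B'.min' hB'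
  · exact Or.inl fun a ha b hb =>
      ((B.le_max' a ha).trans_lt hsep).trans_le (B'.min'_le b hb)
  have hmin'_lt_max : B'.min' hB' < B.max' hB :=
    (not_lt.mp hsep).lt_of_ne (Finset.disjoint_iff_ne.mp hdisj _ (B.max'_mem hB) _
      (B'.min'_mem hB')).symm
  refine Or.inr fun m hm => ⟨⟨_, B.min'_mem hB, hmin.trans_le (B'.min'_le m hm)⟩,
    ⟨_, B.max'_mem hB, ?_⟩⟩
  by_contra hge
  have hmax_lt : B.max' hB < m :=
    (not_lt.mp hge).lt_of_ne (Finset.disjoint_iff_ne.mp hdisj _ (B.max'_mem hB) m hm)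
  exact hnc _ (B.min'_mem hB) _ (B.max'_mem hB) _ (B'.min'_mem hB') m hm
    ⟨hmin, hmin'_lt_max, hmax_lt⟩

lemma blocksLT_or_nestedIn_of_noCrossing {P : PartData} (hP : NoCrossing P) {B B' : Finset ℕ}
    (hB : B ∈ P) (hB' : B' ∈ P) (hne : B ≠ B') (hBne : B.Nonempty) (hB'ne : B'.Nonempty)
    (hdisj : Disjoint B B') :
    BlocksLT B B' ∨ BlocksLT B' B ∨ NestedIn B B' ∨ NestedIn B' B := by
  rcases (Finset.disjoint_iff_ne.mp hdisj _ (B.min'_mem hBne) _ (B'.min'_mem hB'ne)).lt_or_gt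
    with hmin | hmin
  · rcases blocksLT_or_nestedIn_of_min'_lt hBne hB'ne hdisj (hP B hB B' hB' hne) hmin
      with h | h <;> simp only [h, true_or, or_true]
  · rcases blocksLT_or_nestedIn_of_min'_lt hB'ne hBne hdisj.symm (hP B' hB' B hB hne.symm) hmin
      with h | h <;> simp only [h, true_or, or_true]

/-- For two distinct blocks `B, B'` of a non-crossing partition of
`[n] = {0,…,n-1}`, exactly one of the four relations `B < B'`, `B' < B`,
`B <_L B'`, `B' <_L B` holds. -/
theorem blocks_exactly_one_relation (n : ℕ)
    (L : Finpartition (Finset.range n)) (hL : NoCrossing L.parts)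
    {B B' : Finset ℕ} (hB : B ∈ L.parts) (hB' : B' ∈ L.parts) (hne : B ≠ B') :
    (BlocksLT B B' ∧ ¬ BlocksLT B' B ∧ ¬ NestedIn B B' ∧ ¬ NestedIn B' B) ∨
    (BlocksLT B' B ∧ ¬ BlocksLT B B' ∧ ¬ NestedIn B B' ∧ ¬ NestedIn B' B) ∨
    (NestedIn B B' ∧ ¬ BlocksLT B B' ∧ ¬ BlocksLT B' B ∧ ¬ NestedIn B' B) ∨
    (NestedIn B' B ∧ ¬ BlocksLT B B' ∧ ¬ BlocksLT B' B ∧ ¬ NestedIn B B') := by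
  have hBne : B.Nonempty := L.nonempty_of_mem_parts hB
  have hB'ne : B'.Nonempty := L.nonempty_of_mem_parts hB'
  rcases blocksLT_or_nestedIn_of_noCrossing hL hB hB' hne hBne hB'ne (L.disjoint hB hB' hne)
    with h | h | h | h
  · exact Or.inl ⟨h, h.not_blocksLT_symm hBne hB'ne, h.not_nestedIn hBne,
      h.not_nestedIn_symm hB'ne⟩
  · exact Or.inr <| Or.inl ⟨h, h.not_blocksLT_symm hB'ne hBne, h.not_nestedIn_symm hBne,
      h.not_nestedIn hB'ne⟩
  · exact Or.inr <| Or.inr <| Or.inl ⟨h, fun h' => h'.not_nestedIn hBne h,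
      fun h' => h'.not_nestedIn_symm hBne h, h.not_nestedIn_symm hBne⟩
  · exact Or.inr <| Or.inr <| Or.inr ⟨h, fun h' => h'.not_nestedIn_symm hB'ne h,
      fun h' => h'.not_nestedIn hB'ne h, h.not_nestedIn_symm hB'ne⟩
end

section
/- Let L be a non-crossing partition of [n], let L = Q ⊔_adm U be an admissible decomposition of its set of blocks, let S be the union of the blocks of Q, and let J₁,…,J_k be the connected components of [n]−S. Then every block of U is contained in exactly one component J_i; consequently, for each i the blocks of U contained in J_i form a non-crossing partition J_i^{L,Q} of J_i, and Q is a non-crossing partition of S. -/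
open scoped TensorProduct

/-!
If a point `s` of a block `q ∈ Q` lay strictly between two points of a block `u ∈ U`, then,
since `q` is not nested in `u`, some point of `q` lies outside the span of `u`, and together
with `s` it makes `q` and `u` cross. So no block of `U` is separated by `S`, every block of `U`
lies in one component, and the components as well as `S` are unions of blocks of `L`, whose
sub-collections inherit disjointness and non-crossing.
-/

open Finset

def Unseparated (S : Finset ℕ) (x y : ℕ) : Prop :=
  ∀ s ∈ S, ¬ (min x y < s ∧ s < max x y)

namespace Unseparated

variable {S : Finset ℕ} {x y z : ℕ}

theorem symm (h : Unseparated S x y) : Unseparated S y x := by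
  intro s hs
  rw [min_comm, max_comm]
  exact h s hs

theorem trans (hxy : Unseparated S x y) (hyz : Unseparated S y z) (hy : y ∉ S) :
    Unseparated S x z := by
  intro s hs hxz
  have := hxy s hs
  have := hyz s hs
  have : y ≠ s := fun h => hy (h ▸ hs)
  omega

end Unseparated

section Components

variable {S T : Finset ℕ} {x y z : ℕ}

theorem mem_compOf : z ∈ compOf S T x ↔ z ∈ T ∧ Unseparated S x z :=
  mem_filter

theorem compOf_eq_of_unseparated (hx : x ∉ S) (hy : y ∉ S) (h : Unseparated S x y) :
    compOf S T x = compOf S T y := by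
  ext z
  simp only [mem_compOf]
  exact and_congr_right fun _ => ⟨fun hxz => h.symm.trans hxz hx, fun hyz => h.trans hyz hy⟩

end Components

namespace NoCrossing

variable {P : PartData}

theorem mono {P' : PartData} (h : NoCrossing P) (hP' : P' ⊆ P) : NoCrossing P' :=
  fun B hB B' hB' => h B (hP' hB) B' (hP' hB')

theorem not_between_of_not_nestedIn (hP : NoCrossing P) {q u : Finset ℕ} (hq : q ∈ P)
    (hu : u ∈ P) (hqu : Disjoint q u) (hnest : ¬ NestedIn q u) {s x y : ℕ} (hs : s ∈ q)
    (hx : x ∈ u) (hy : y ∈ u) : ¬ (x < s ∧ s < y) := by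
  rintro ⟨hxs, hsy⟩
  have hne : q ≠ u := by
    rintro rfl
    exact disjoint_left.mp hqu hs hs
  simp only [NestedIn, not_forall, not_and, not_exists, not_lt] at hnest
  obtain ⟨m, hm, hout⟩ := hnest
  have hmu : m ∉ u := disjoint_left.mp hqu hm
  by_cases hbelow : ∃ a ∈ u, a < m
  · have hym : y < m :=
      lt_of_le_of_ne (hout hbelow y hy) fun h => hmu (h ▸ hy)
    exact hP u hu q hq hne.symm x hx y hy s hs m hm ⟨hxs, hsy, hym⟩
  · have hmx : m < x := by
      simp only [not_exists, not_and, not_lt] at hbelow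
      exact lt_of_le_of_ne (hbelow x hx) fun h => hmu (h ▸ hx)
    exact hP q hq u hu hne m hm s hs x hx y hy ⟨hmx, hxs, hsy⟩

theorem unseparated_of_adm (hP : NoCrossing P) {Q U : PartData} (hQ : Q ⊆ P) (hU : U ⊆ P)
    (hdisj : ∀ q ∈ Q, ∀ u ∈ U, Disjoint q u) (hadm : Adm Q U)
    {u : Finset ℕ} (hu : u ∈ U) {x y : ℕ} (hx : x ∈ u) (hy : y ∈ u) :
    Unseparated (Q.sup id) x y := by
  intro s hs
  obtain ⟨q, hq, hsq⟩ := mem_sup.mp hs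
  have hxy := hP.not_between_of_not_nestedIn (hQ hq) (hU hu) (hdisj q hq u hu)
    (hadm q hq u hu) hsq hx hy
  have hyx := hP.not_between_of_not_nestedIn (hQ hq) (hU hu) (hdisj q hq u hu)
    (hadm q hq u hu) hsq hy hx
  omega

end NoCrossing

namespace Finpartition

section General

variable {α : Type*} [DecidableEq α] {s : Finset α} (L : Finpartition s)
  {Q U : Finset (Finset α)}

theorem disjoint_of_mem_of_mem (hQU : Disjoint Q U) (hparts : L.parts = Q ∪ U)
    {q u : Finset α} (hq : q ∈ Q) (hu : u ∈ U) : Disjoint q u :=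
  L.disjoint (hparts ▸ mem_union_left _ hq) (hparts ▸ mem_union_right _ hu)
    fun h => disjoint_left.mp hQU hq (h ▸ hu)

theorem subset_sdiff_sup_of_mem (hQU : Disjoint Q U) (hparts : L.parts = Q ∪ U)
    {u : Finset α} (hu : u ∈ U) : u ⊆ s \ Q.sup id :=
  subset_sdiff.mpr ⟨L.le (hparts ▸ mem_union_right _ hu),
    Finset.disjoint_sup_right.mpr fun _ hq => (L.disjoint_of_mem_of_mem hQU hparts hq hu).symm⟩

theorem exists_mem_of_mem_sdiff_sup (hparts : L.parts = Q ∪ U) {x : α}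
    (hx : x ∈ s \ Q.sup id) : ∃ u ∈ U, x ∈ u := by
  obtain ⟨hxs, hxQ⟩ := mem_sdiff.mp hx
  obtain ⟨t, ht, hxt⟩ := L.exists_mem hxs
  rw [hparts] at ht
  rcases mem_union.mp ht with htQ | htU
  · exact absurd (mem_sup.mpr ⟨t, htQ, hxt⟩) hxQ
  · exact ⟨t, htU, hxt⟩

end General

variable {s : Finset ℕ} (L : Finpartition s) {Q U : PartData}

theorem subset_compOf_of_mem (hQU : Disjoint Q U) (hparts : L.parts = Q ∪ U)
    (hunsep : ∀ u ∈ U, ∀ x ∈ u, ∀ y ∈ u, Unseparated (Q.sup id) x y)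
    {u : Finset ℕ} (hu : u ∈ U) {x : ℕ} (hx : x ∈ u) :
    u ⊆ compOf (Q.sup id) (s \ Q.sup id) x :=
  fun y hy => mem_compOf.mpr ⟨L.subset_sdiff_sup_of_mem hQU hparts hu hy, hunsep u hu x hx y hy⟩

theorem sup_filter_subset_compOf (hQU : Disjoint Q U) (hparts : L.parts = Q ∪ U)
    (hunsep : ∀ u ∈ U, ∀ x ∈ u, ∀ y ∈ u, Unseparated (Q.sup id) x y)
    {x : ℕ} (hx : x ∈ s \ Q.sup id) :
    (U.filter (· ⊆ compOf (Q.sup id) (s \ Q.sup id) x)).sup id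
      = compOf (Q.sup id) (s \ Q.sup id) x := by
  refine le_antisymm (Finset.sup_le fun u hu => (mem_filter.mp hu).2) fun z hz => ?_
  obtain ⟨hzT, hxz⟩ := mem_compOf.mp hz
  obtain ⟨u, hu, hzu⟩ := L.exists_mem_of_mem_sdiff_sup hparts hzT
  have hcomp : compOf (Q.sup id) (s \ Q.sup id) x = compOf (Q.sup id) (s \ Q.sup id) z :=
    compOf_eq_of_unseparated (mem_sdiff.mp hx).2 (mem_sdiff.mp hzT).2 hxz
  refine mem_sup.mpr ⟨u, mem_filter.mpr ⟨hu, ?_⟩, hzu⟩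
  rw [hcomp]
  exact L.subset_compOf_of_mem hQU hparts hunsep hu hzu

end Finpartition

/-- Let `L` be a non-crossing partition of `[n] = {0,…,n-1}`,
`L = Q ⊔_adm U` an admissible decomposition of its set of blocks, `S` the union of
the blocks of `Q`, and let the `Jᵢ` be the connected components of `[n] − S`.
Then every block of `U` is contained in exactly one component (no element of `S`
separates two elements of a block of `U`, and the components of the elements of a
block of `U` coincide); for each component `J`, the blocks of `U` contained in `J`
form a non-crossing partition of `J`; and `Q` is a non-crossing partition of `S`. -/
theorem blocks_of_admissible_decomposition (n : ℕ)
    (L : Finpartition (Finset.range n)) (hL : NoCrossing L.parts)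
    (Q U : PartData) (hQU : Disjoint Q U) (hparts : L.parts = Q ∪ U)
    (hadm : Adm Q U) :
    (∀ u ∈ U, ∀ x ∈ u, ∀ y ∈ u, ∀ s ∈ Q.sup id, ¬ (min x y < s ∧ s < max x y)) ∧
    (∀ u ∈ U, ∀ x ∈ u, u ⊆ compOf (Q.sup id) (Finset.range n \ Q.sup id) x) ∧
    (∀ u ∈ U, ∀ x ∈ u, ∀ y ∈ u,
      compOf (Q.sup id) (Finset.range n \ Q.sup id) x
        = compOf (Q.sup id) (Finset.range n \ Q.sup id) y) ∧
    (∀ x ∈ Finset.range n \ Q.sup id,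
      ∃ P : Finpartition (compOf (Q.sup id) (Finset.range n \ Q.sup id) x),
        P.parts = U.filter (· ⊆ compOf (Q.sup id) (Finset.range n \ Q.sup id) x) ∧
        NoCrossing P.parts) ∧
    (∃ P : Finpartition (Q.sup id), P.parts = Q ∧ NoCrossing Q) := by
  have hQ : Q ⊆ L.parts := hparts ▸ subset_union_left
  have hU : U ⊆ L.parts := hparts ▸ subset_union_right
  have hunsep : ∀ u ∈ U, ∀ x ∈ u, ∀ y ∈ u, Unseparated (Q.sup id) x y :=
    fun _ hu _ hx _ hy => hL.unseparated_of_adm hQ hU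
      (fun _ hq _ hu => L.disjoint_of_mem_of_mem hQU hparts hq hu) hadm hu hx hy
  have hnotS : ∀ u ∈ U, ∀ x ∈ u, x ∉ Q.sup id :=
    fun _ hu _ hx => (mem_sdiff.mp (L.subset_sdiff_sup_of_mem hQU hparts hu hx)).2
  have hfilter : ∀ J : Finset ℕ, U.filter (· ⊆ J) ⊆ L.parts :=
    fun _ => (filter_subset _ _).trans hU
  refine ⟨hunsep, fun _ hu _ hx => L.subset_compOf_of_mem hQU hparts hunsep hu hx,
    fun u hu x hx y hy => compOf_eq_of_unseparated (hnotS u hu x hx) (hnotS u hu y hy)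
      (hunsep u hu x hx y hy),
    fun x hx => ⟨L.ofSubset (hfilter _) (L.sup_filter_subset_compOf hQU hparts hunsep hx), rfl,
      hL.mono (hfilter _)⟩,
    ⟨L.ofSubset hQ rfl, rfl, hL.mono hQ⟩⟩
end

section
/- The splitting map Sp : T̄(T(A)) → T̄(NC(A)) is a morphism of unshuffle bialgebras: it is multiplicative and unital, and it intertwines the coproducts and half-coproducts: Δ ∘ Sp = (Sp ⊗ Sp) ∘ Δ, Δ_≺⁺ ∘ Sp = (Sp ⊗ Sp) ∘ Δ_≺⁺, and Δ_≻⁺ ∘ Sp = (Sp ⊗ Sp) ∘ Δ_≻⁺, where on the left the structure maps are those of T̄(NC(A)) and on the right those of T̄(T(A)). -/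
open scoped TensorProduct

noncomputable section

/-- `NC(A) = ⊕_{n ≥ 1} (span of partition data) ⊗ A^{⊗n}`: the space of `A`-decorated
(non-crossing) partitions; the genuine non-crossing ones are singled out by `IsNCP`. -/
abbrev NCA (K : Type*) [Field K] (A : Type*) [Ring A] [Algebra K A] : Type _ :=
  DirectSum (PartData × ℕ) fun p => PiTensorProduct K fun _ : Fin (p.2 + 1) => A

/-- `T̄(NC(A))`: the tensor algebra over the space of decorated non-crossing partitions. -/
abbrev TNA (K : Type*) [Field K] (A : Type*) [Ring A] [Algebra K A] : Type _ :=
  TensorAlgebra K (NCA K A)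

variable (K : Type*) [Field K] (A : Type*) [Ring A] [Algebra K A]

/-- The decorated partition `P ⊗ (a₀ ⋯ a_k)` as an element of the module `NC(A)`. -/
def dvec (P : PartData) (k : ℕ) (a : ℕ → A) : NCA K A :=
  DirectSum.of (fun p : PartData × ℕ => PiTensorProduct K fun _ : Fin (p.2 + 1) => A)
    (P, k) (PiTensorProduct.tprod K fun i : Fin (k + 1) => a (i : ℕ))

/-- The decorated partition `P ⊗ (a₀ ⋯ a_{m-1})` (decoration of length `m`) as a single
bar-letter of `T̄(NC(A))`; length `0` gives the unit. -/
def dgen (P : PartData) (m : ℕ) (a : ℕ → A) : TNA K A :=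
  match m with
  | 0 => 1
  | k + 1 => TensorAlgebra.ι K (dvec K A P k a)

/-- The decorated standardized piece `P' ⊗ a_S`: the partition `P'` decorated by the
letters of `a` indexed by `S`, in increasing order. -/
def dsub (a : ℕ → A) (P' : PartData) (S : Finset ℕ) : TNA K A :=
  dgen K A P' S.card fun j => a ((S.sort (· ≤ ·)).getD j 0)

/-- The value of the coproduct on a decorated non-crossing partition `L ⊗ (a₀ ⋯ a_{n-1})`:
`Σ_{L = Q ⊔_adm U} (st(Q) ⊗ a_Q) ⊗ (st(J₁^{L,Q}) ⊗ a_{J₁^{L,Q}} | ⋯ )`. -/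
def dcopF (P : PartData) (a : ℕ → A) : TNA K A ⊗[K] TNA K A :=
  ∑ Q ∈ P.powerset.filter (fun Q => Adm Q (P \ Q)),
    dsub K A a (stdParts Q) (Q.sup id) ⊗ₜ[K]
      ((comps (Q.sup id) (P.sup id \ Q.sup id)).map fun J =>
        dsub K A a (stdParts ((P \ Q).filter (· ⊆ J))) J).prod

/-- The value of the left half-coproduct `Δ_≺⁺`: the part of the sum where the block
containing the first element (here `0`) lies in `Q`. -/
def dcopP (P : PartData) (a : ℕ → A) : TNA K A ⊗[K] TNA K A :=
  ∑ Q ∈ P.powerset.filter (fun Q => Adm Q (P \ Q) ∧ ∃ q ∈ Q, 0 ∈ q),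
    dsub K A a (stdParts Q) (Q.sup id) ⊗ₜ[K]
      ((comps (Q.sup id) (P.sup id \ Q.sup id)).map fun J =>
        dsub K A a (stdParts ((P \ Q).filter (· ⊆ J))) J).prod

/-- The value of the right half-coproduct `Δ_≻⁺`: the part of the sum where the block
containing the first element (here `0`) lies in `U`. -/
def dcopS (P : PartData) (a : ℕ → A) : TNA K A ⊗[K] TNA K A :=
  ∑ Q ∈ P.powerset.filter (fun Q => Adm Q (P \ Q) ∧ ∃ u ∈ P \ Q, 0 ∈ u),
    dsub K A a (stdParts Q) (Q.sup id) ⊗ₜ[K]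
      ((comps (Q.sup id) (P.sup id \ Q.sup id)).map fun J =>
        dsub K A a (stdParts ((P \ Q).filter (· ⊆ J))) J).prod

/-- The set of bar-words of genuine decorated non-crossing partitions in `T̄(NC(A))`. -/
def DWord : Set (TNA K A) :=
  {x | ∃ l : List (PartData × ℕ × (ℕ → A)),
        (∀ t ∈ l, 1 ≤ t.2.1 ∧ IsNCP t.2.1 t.1) ∧
        x = (l.map fun t => dgen K A t.1 t.2.1 t.2.2).prod}

/-- The set of nonempty bar-words of genuine decorated non-crossing partitions. -/
def DWordPos : Set (TNA K A) :=
  {x | ∃ l : List (PartData × ℕ × (ℕ → A)), l ≠ [] ∧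
        (∀ t ∈ l, 1 ≤ t.2.1 ∧ IsNCP t.2.1 t.1) ∧
        x = (l.map fun t => dgen K A t.1 t.2.1 t.2.2).prod}

/-- `T̄(NC(A))` proper: the span of all words of genuine decorated non-crossing
partitions. -/
def DSpan : Submodule K (TNA K A) := Submodule.span K (DWord K A)

/-- `T(NC(A))`: the augmentation ideal, the span of all nonempty words of genuine
decorated non-crossing partitions. -/
def DIdeal : Submodule K (TNA K A) := Submodule.span K (DWordPos K A)

/-- The augmentation (counit) `e` of `T̄(NC(A))`: `e(1) = 1`, `e = 0` on `T(NC(A))`. -/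
def augD : TNA K A →ₐ[K] K := TensorAlgebra.lift K (0 : NCA K A →ₗ[K] K)

/-- Half-convolution / convolution of linear forms with respect to a (half-)coproduct
`D` on `T̄(NC(A))`: `f ⋆_D g := m_K ∘ (f ⊗ g) ∘ D`. -/
def convD (D : TNA K A →ₗ[K] TNA K A ⊗[K] TNA K A) (f g : TNA K A →ₗ[K] K) :
    TNA K A →ₗ[K] K :=
  LinearMap.mul' K K ∘ₗ TensorProduct.map f g ∘ₗ D

/-- The linear map `x ↦ x ⊗ 1` on `T̄(NC(A))`. -/
def rOneD : TNA K A →ₗ[K] TNA K A ⊗[K] TNA K A :=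
  (TensorProduct.mk K (TNA K A) (TNA K A)).flip 1

/-- The linear map `x ↦ 1 ⊗ x` on `T̄(NC(A))`. -/
def lOneD : TNA K A →ₗ[K] TNA K A ⊗[K] TNA K A :=
  TensorProduct.mk K (TNA K A) (TNA K A) 1

end

noncomputable section

/-- `T(A) = ⊕_{n ≥ 1} A^{⊗n}`, the positive part of the tensor algebra over `A`. -/
abbrev Tpos (K : Type*) [Field K] (A : Type*) [Ring A] [Algebra K A] : Type _ :=
  DirectSum ℕ fun n => PiTensorProduct K fun _ : Fin (n + 1) => A

/-- `T̄(T(A))`: the double tensor algebra over `A`. -/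
abbrev TT (K : Type*) [Field K] (A : Type*) [Ring A] [Algebra K A] : Type _ :=
  TensorAlgebra K (Tpos K A)

variable (K : Type*) [Field K] (A : Type*) [Ring A] [Algebra K A]

/-- The word `a₀ ⋯ a_k` as an element of the module `T(A)`. -/
def tvec (k : ℕ) (a : ℕ → A) : Tpos K A :=
  DirectSum.of (fun n => PiTensorProduct K fun _ : Fin (n + 1) => A) k
    (PiTensorProduct.tprod K fun i : Fin (k + 1) => a (i : ℕ))

/-- The word `a₀ ⋯ a_{m-1}` (of length `m`) as a single bar-letter of `T̄(T(A))`;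
the empty word is the unit. -/
def wrd (m : ℕ) (a : ℕ → A) : TT K A :=
  match m with
  | 0 => 1
  | k + 1 => TensorAlgebra.ι K (tvec K A k a)

/-- The subword `a_S` of the letters indexed by `S`, in increasing order. -/
def sw (a : ℕ → A) (S : Finset ℕ) : TT K A :=
  wrd K A S.card fun j => a ((S.sort (· ≤ ·)).getD j 0)

/-- The value of the coproduct on a word of length `m`:
`Δ(a₀ ⋯ a_{m-1}) = Σ_{S ⊆ [m]} a_S ⊗ (a_{J₁}|⋯|a_{J_k})`, `J₁,…,J_k` the connected
components of `[m] − S`. -/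
def wcopF (m : ℕ) (a : ℕ → A) : TT K A ⊗[K] TT K A :=
  ∑ S ∈ (Finset.range m).powerset,
    sw K A a S ⊗ₜ[K] ((comps S (Finset.range m \ S)).map (sw K A a)).prod

/-- The value of the left half-coproduct `Δ_≺⁺` on a word: the part of the sum with
`S` containing the first position. -/
def wcopP (m : ℕ) (a : ℕ → A) : TT K A ⊗[K] TT K A :=
  ∑ S ∈ (Finset.range m).powerset.filter (fun S => 0 ∈ S),
    sw K A a S ⊗ₜ[K] ((comps S (Finset.range m \ S)).map (sw K A a)).prod

/-- The value of the right half-coproduct `Δ_≻⁺` on a word: the part of the sum with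
`S` not containing the first position. -/
def wcopS (m : ℕ) (a : ℕ → A) : TT K A ⊗[K] TT K A :=
  ∑ S ∈ (Finset.range m).powerset.filter (fun S => 0 ∉ S),
    sw K A a S ⊗ₜ[K] ((comps S (Finset.range m \ S)).map (sw K A a)).prod

/-- The augmentation ideal `T(T(A))` of `T̄(T(A))`. -/
def TIdeal : Submodule K (TT K A) :=
  Submodule.span K {x | ∃ (v : Tpos K A) (y : TT K A), x = TensorAlgebra.ι K v * y}

/-- The augmentation (counit) of `T̄(T(A))`. -/
def augT : TT K A →ₐ[K] K := TensorAlgebra.lift K (0 : Tpos K A →ₗ[K] K)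

/-- The linear map `x ↦ x ⊗ 1` on `T̄(T(A))`. -/
def rOneT : TT K A →ₗ[K] TT K A ⊗[K] TT K A :=
  (TensorProduct.mk K (TT K A) (TT K A)).flip 1

/-- The linear map `x ↦ 1 ⊗ x` on `T̄(T(A))`. -/
def lOneT : TT K A →ₗ[K] TT K A ⊗[K] TT K A :=
  TensorProduct.mk K (TT K A) (TT K A) 1

/-- Half-convolution / convolution of linear forms with respect to a (half-)coproduct `D`:
`f ⋆_D g := m_K ∘ (f ⊗ g) ∘ D`. -/
def convT (D : TT K A →ₗ[K] TT K A ⊗[K] TT K A) (f g : TT K A →ₗ[K] K) :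
    TT K A →ₗ[K] K :=
  LinearMap.mul' K K ∘ₗ TensorProduct.map f g ∘ₗ D

end

noncomputable section

variable (K : Type*) [Field K] (A : Type*) [Ring A] [Algebra K A]

/-- The value of the splitting map on a word:
`Sp(a₁⋯aₙ) = Σ_{L ∈ NC_n} L ⊗ (a₁⋯aₙ)`. -/
def spWord (m : ℕ) (a : ℕ → A) : TNA K A :=
  ∑ P ∈ NCset m, dgen K A P m a

end


/-!
Each identity can be checked on a single word `a₁⋯aₘ`: both sides of `Δ ∘ Sp = (Sp ⊗ Sp) ∘ Δ`
are algebra maps, and the half-coproducts satisfy `D(v y) = D(v) Δ(y)` for a letter `v`, which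
`Sp` maps to a sum of letters. On a word, `Δ(Sp(a₁⋯aₘ))` is a sum over non-crossing partitions
`P` of `[m]` with an admissible `Q ⊆ P`, while `(Sp ⊗ Sp)(Δ(a₁⋯aₘ))` is a sum over a subset
`S ⊆ [m]`, a non-crossing partition of `S`, and one of each connected component of `[m] − S`.
Non-crossing together with admissibility is exactly what makes every block of `P \ Q` fit inside
one component of `[m] − ⋃Q`, so `(P, Q) ↦ (⋃Q, Q, P \ Q)` is a bijection between the index
sets, and standardization identifies non-crossing partitions of `S` with those of `[|S|]`.
The half-coproducts are the parts of both sums with `1 ∈ S`, resp. `1 ∉ S`.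
-/

open Finset

lemma rk_lt_card {S : Finset ℕ} {x : ℕ} (hx : x ∈ S) : rk S x < S.card :=
  card_lt_card <| filter_ssubset.mpr ⟨x, hx, lt_irrefl x⟩

lemma rk_strictMonoOn (S : Finset ℕ) : StrictMonoOn (rk S) S := fun x hx _ _ hxy =>
  card_lt_card <| (ssubset_iff_of_subset fun _ hz => mem_filter.mpr
      ⟨(mem_filter.mp hz).1, (mem_filter.mp hz).2.trans hxy⟩).mpr
    ⟨x, mem_filter.mpr ⟨hx, hxy⟩, by simp⟩

lemma image_rk (S : Finset ℕ) : S.image (rk S) = range S.card :=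
  eq_of_subset_of_card_le (fun _ h => by
      obtain ⟨x, hx, rfl⟩ := mem_image.mp h
      exact mem_range.mpr (rk_lt_card hx))
    (by rw [card_range, card_image_of_injOn (rk_strictMonoOn S).injOn])

structure IsNCPartition (S : Finset ℕ) (P : PartData) : Prop where
  empty_notMem : ∅ ∉ P
  disjoint : ∀ B ∈ P, ∀ B' ∈ P, B ≠ B' → Disjoint B B'
  sup_eq : P.sup id = S
  noCrossing : NoCrossing P

lemma isNCP_iff_isNCPartition {n : ℕ} {P : PartData} : IsNCP n P ↔ IsNCPartition (range n) P :=
  ⟨fun ⟨h₁, h₂, h₃, h₄⟩ => ⟨h₁, h₂, h₃, h₄⟩, fun ⟨h₁, h₂, h₃, h₄⟩ => ⟨h₁, h₂, h₃, h₄⟩⟩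

namespace IsNCPartition

variable {S : Finset ℕ} {P : PartData} {B : Finset ℕ}

lemma subset_of_mem (hP : IsNCPartition S P) (hB : B ∈ P) : B ⊆ S :=
  hP.sup_eq ▸ le_sup (f := id) hB

lemma nonempty_of_mem (hP : IsNCPartition S P) (hB : B ∈ P) : B.Nonempty :=
  nonempty_iff_ne_empty.mpr fun h => hP.empty_notMem (h ▸ hB)

lemma mono (hP : IsNCPartition S P) {Q : PartData} (hQ : Q ⊆ P) : IsNCPartition (Q.sup id) Q :=
  ⟨fun h => hP.empty_notMem (hQ h), fun B hB B' hB' => hP.disjoint B (hQ hB) B' (hQ hB'), rfl,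
    fun B hB B' hB' => hP.noCrossing B (hQ hB) B' (hQ hB')⟩

lemma image (hP : IsNCPartition S P) {f : ℕ → ℕ} (hf : StrictMonoOn f S) :
    IsNCPartition (S.image f) (P.image (Finset.image f)) := by
  have hmem {B x} (hB : B ∈ P) (hx : x ∈ B) : x ∈ (S : Set ℕ) := hP.subset_of_mem hB hx
  have hne {B B'} (hB : B ∈ P) (hB' : B' ∈ P) (h : B.image f ≠ B'.image f) : B ≠ B' :=
    fun e => h (e ▸ rfl)
  refine ⟨by simpa using hP.empty_notMem, ?_, ?_, ?_⟩
  · simp only [forall_mem_image]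
    intro B hB B' hB' h
    refine disjoint_left.mpr fun z hz hz' => ?_
    obtain ⟨x, hx, rfl⟩ := mem_image.mp hz
    obtain ⟨y, hy, hxy⟩ := mem_image.mp hz'
    rw [hf.injOn (hmem hB' hy) (hmem hB hx) hxy] at hy
    exact disjoint_left.mp (hP.disjoint B hB B' hB' (hne hB hB' h)) hx hy
  · ext z
    simp only [mem_sup, mem_image, id, ← hP.sup_eq]
    constructor
    · rintro ⟨_, ⟨B, hB, rfl⟩, hz⟩
      obtain ⟨x, hx, rfl⟩ := mem_image.mp hz
      exact ⟨x, ⟨B, hB, hx⟩, rfl⟩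
    · rintro ⟨x, ⟨B, hB, hx⟩, rfl⟩
      exact ⟨_, ⟨B, hB, rfl⟩, mem_image_of_mem f hx⟩
  · simp only [NoCrossing, forall_mem_image]
    intro B hB B' hB' h x₁ hx₁ x₂ hx₂ y₁ hy₁ y₂ hy₂
    simp only [hf.lt_iff_lt (hmem hB hx₁) (hmem hB' hy₁), hf.lt_iff_lt (hmem hB' hy₁) (hmem hB hx₂),
      hf.lt_iff_lt (hmem hB hx₂) (hmem hB' hy₂)]
    exact hP.noCrossing B hB B' hB' (hne hB hB' h) x₁ hx₁ x₂ hx₂ y₁ hy₁ y₂ hy₂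

lemma exists_mem_sdiff_iff (hP : IsNCPartition S P) {Q : PartData} (hQ : Q ⊆ P) {x : ℕ}
    (hx : x ∈ S) :
    (∃ u ∈ P \ Q, x ∈ u) ↔ x ∉ Q.sup id := by
  constructor
  · rintro ⟨u, hu, hxu⟩ hxQ
    obtain ⟨huP, huQ⟩ := mem_sdiff.mp hu
    obtain ⟨q, hq, hxq⟩ := mem_sup.mp hxQ
    exact disjoint_left.mp (hP.disjoint q (hQ hq) u huP fun h => huQ (h ▸ hq)) hxq hxu
  · intro hxQ
    obtain ⟨B, hB, hxB⟩ := mem_sup.mp (hP.sup_eq ▸ hx : x ∈ P.sup id)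
    exact ⟨B, mem_sdiff.mpr ⟨hB, fun h => hxQ (mem_sup.mpr ⟨B, h, hxB⟩)⟩, hxB⟩

end IsNCPartition

open Classical in
noncomputable def ncPartitions (S : Finset ℕ) : Finset PartData :=
  S.powerset.powerset.filter (IsNCPartition S)

lemma mem_ncPartitions {S : Finset ℕ} {P : PartData} : P ∈ ncPartitions S ↔ IsNCPartition S P := by
  simp only [ncPartitions, mem_filter, mem_powerset, and_iff_right_iff_imp]
  exact fun hP B hB => mem_powerset.mpr (hP.subset_of_mem hB)

lemma NCset_eq_ncPartitions (n : ℕ) : NCset n = ncPartitions (range n) := by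
  ext P
  simp only [NCset, mem_ncPartitions, mem_filter, mem_powerset, and_iff_right_iff_imp,
    isNCP_iff_isNCPartition]
  exact fun hP B hB => mem_powerset.mpr (hP.subset_of_mem hB)

lemma mem_NCset {n : ℕ} {P : PartData} : P ∈ NCset n ↔ IsNCPartition (range n) P := by
  rw [NCset_eq_ncPartitions, mem_ncPartitions]

lemma image_image_of_leftInvOn {f g : ℕ → ℕ} {T B : Finset ℕ} (hgf : Set.LeftInvOn g f T)
    (hB : B ⊆ T) : (B.image f).image g = B := by
  rw [image_image]
  exact (image_congr fun x hx => hgf (hB hx)).trans image_id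

lemma sum_ncPartitions_image {M : Type*} [AddCommMonoid M] {S : Finset ℕ} {f : ℕ → ℕ}
    (hf : StrictMonoOn f S) (G : PartData → M) :
    ∑ L ∈ ncPartitions S, G (L.image (Finset.image f)) = ∑ L ∈ ncPartitions (S.image f), G L := by
  set g := Function.invFunOn f S
  have hgf : Set.LeftInvOn g f S := hf.injOn.leftInvOn_invFunOn
  have hfg : Set.LeftInvOn f g (S.image f) := fun y hy =>
    Function.invFunOn_eq (by simpa using hy)
  have hgS : (S.image f).image g = S := image_image_of_leftInvOn hgf Subset.rfl
  have hg : StrictMonoOn g (S.image f) := by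
    simp only [StrictMonoOn, coe_image, Set.forall_mem_image]
    intro x hx y hy hxy
    rwa [hgf hx, hgf hy, ← hf.lt_iff_lt hx hy]
  refine sum_nbij' (Finset.image (Finset.image f)) (Finset.image (Finset.image g)) ?_ ?_ ?_ ?_ ?_
  · exact fun L hL => mem_ncPartitions.mpr ((mem_ncPartitions.mp hL).image hf)
  · exact fun L hL => mem_ncPartitions.mpr (hgS ▸ (mem_ncPartitions.mp hL).image hg)
  · intro L hL
    rw [image_image]
    exact (image_congr fun B hB =>
      image_image_of_leftInvOn hgf ((mem_ncPartitions.mp hL).subset_of_mem hB)).trans image_id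
  · intro L hL
    rw [image_image]
    exact (image_congr fun B hB =>
      image_image_of_leftInvOn hfg ((mem_ncPartitions.mp hL).subset_of_mem hB)).trans image_id
  · exact fun _ _ => rfl

lemma sum_ncPartitions_stdParts {M : Type*} [AddCommMonoid M] (S : Finset ℕ)
    (G : PartData → M) :
    ∑ L ∈ ncPartitions S, G (stdParts L) = ∑ L ∈ NCset S.card, G L := by
  rw [NCset_eq_ncPartitions, ← image_rk, ← sum_ncPartitions_image (rk_strictMonoOn S)]
  refine sum_congr rfl fun L hL => ?_
  rw [stdParts, (mem_ncPartitions.mp hL).sup_eq]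

section Components

variable {S T J J' : Finset ℕ} {x y z : ℕ}

lemma mem_compOf_s13 : y ∈ compOf S T x ↔ y ∈ T ∧ ∀ s ∈ S, ¬ (min x y < s ∧ s < max x y) :=
  mem_filter

lemma self_mem_compOf (hx : x ∈ T) : x ∈ compOf S T x :=
  mem_compOf_s13.mpr ⟨hx, fun _ _ h => by omega⟩

lemma compOf_eq_of_mem (hST : Disjoint S T) (hx : x ∈ T) (hy : y ∈ compOf S T x) :
    compOf S T y = compOf S T x := by
  have hxS : x ∉ S := disjoint_right.mp hST hx
  have hyS : y ∉ S := disjoint_right.mp hST (mem_compOf_s13.mp hy).1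
  ext z
  simp only [mem_compOf_s13]
  refine and_congr_right fun _ => forall₂_congr fun s hs => ?_
  have := (mem_compOf_s13.mp hy).2 s hs
  have : s ≠ x := fun h => hxS (h ▸ hs)
  have : s ≠ y := fun h => hyS (h ▸ hs)
  omega

lemma mem_comps : J ∈ comps S T ↔ ∃ x ∈ T, compOf S T x = J := by
  simp [comps]

lemma compOf_mem_comps (hx : x ∈ T) : compOf S T x ∈ comps S T :=
  mem_comps.mpr ⟨x, hx, rfl⟩

lemma subset_of_mem_comps (hJ : J ∈ comps S T) : J ⊆ T := by
  obtain ⟨x, -, rfl⟩ := mem_comps.mp hJ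
  exact filter_subset _ _

lemma eq_compOf_of_mem_comps (hST : Disjoint S T) (hJ : J ∈ comps S T) (hy : y ∈ J) :
    J = compOf S T y := by
  obtain ⟨x, hx, rfl⟩ := mem_comps.mp hJ
  exact (compOf_eq_of_mem hST hx hy).symm

lemma eq_of_mem_comps (hST : Disjoint S T) (hJ : J ∈ comps S T) (hJ' : J' ∈ comps S T)
    (hx : x ∈ J) (hx' : x ∈ J') : J = J' :=
  (eq_compOf_of_mem_comps hST hJ hx).trans (eq_compOf_of_mem_comps hST hJ' hx').symm

lemma pairwise_disjoint_comps (hST : Disjoint S T) : (comps S T).Pairwise Disjoint :=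
  (List.nodup_dedup _).imp_of_mem fun hJ hJ' hne =>
    disjoint_left.mpr fun _ hx hx' => hne (eq_of_mem_comps hST hJ hJ' hx hx')

lemma not_between_of_mem_comps (hST : Disjoint S T) (hJ : J ∈ comps S T) (hx : x ∈ J)
    (hy : y ∈ J) {s : ℕ} (hs : s ∈ S) : ¬ (x < s ∧ s < y) := fun h =>
  (mem_compOf_s13.mp (eq_compOf_of_mem_comps hST hJ hx ▸ hy)).2 s hs (by omega)

lemma mem_of_between_of_mem_comps (hST : Disjoint S T) (hJ : J ∈ comps S T) (hx : x ∈ J)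
    (hy : y ∈ J) (hz : z ∈ T) (h : x < z ∧ z < y) : z ∈ J := by
  rw [eq_compOf_of_mem_comps hST hJ hx, mem_compOf_s13]
  exact ⟨hz, fun s hs hs' => not_between_of_mem_comps hST hJ hx hy hs (by omega)⟩

end Components

section Refinements

open Classical in
/-- The families `(J₁^{L,Q}, …, J_k^{L,Q})` of the coproduct, glued into one collection of
blocks: a non-crossing partition of each `J ∈ l`. -/
noncomputable def ncRefinements (l : List (Finset ℕ)) : Finset PartData :=
  (l.toFinset.sup id).powerset.powerset.filter fun V =>
    (∀ u ∈ V, ∃ J ∈ l, u ⊆ J) ∧ ∀ J ∈ l, IsNCPartition J (V.filter (· ⊆ J))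

variable {l : List (Finset ℕ)} {V : PartData} {u : Finset ℕ}

lemma mem_ncRefinements :
    V ∈ ncRefinements l ↔
      (∀ u ∈ V, ∃ J ∈ l, u ⊆ J) ∧ ∀ J ∈ l, IsNCPartition J (V.filter (· ⊆ J)) := by
  simp only [ncRefinements, mem_filter, mem_powerset, and_iff_right_iff_imp]
  intro h u hu
  obtain ⟨J, hJ, huJ⟩ := h.1 u hu
  exact mem_powerset.mpr (huJ.trans (le_sup (f := id) (List.mem_toFinset.mpr hJ)))

lemma nonempty_of_mem_ncRefinements (hV : V ∈ ncRefinements l) (hu : u ∈ V) : u.Nonempty := by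
  obtain ⟨⟨J, hJ, huJ⟩, hV⟩ := And.imp_left (· u hu) (mem_ncRefinements.mp hV)
  exact (hV J hJ).nonempty_of_mem (mem_filter.mpr ⟨hu, huJ⟩)

lemma ncRefinements_nil : ncRefinements [] = {∅} := by
  ext V
  simp only [mem_ncRefinements, List.not_mem_nil, false_and, exists_false, imp_false,
    false_imp_iff, implies_true, and_true, mem_singleton, eq_empty_iff_forall_notMem]

lemma not_subset_of_disjoint {J J' : Finset ℕ} (hd : Disjoint J J') (hu : u.Nonempty)
    (h : u ⊆ J') : ¬ u ⊆ J := fun h' =>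
  hu.ne_empty (disjoint_self_iff_empty _ |>.mp (hd.mono h' h))

lemma filter_union_of_mem_ncRefinements {J : Finset ℕ} (hJ : ∀ J' ∈ l, Disjoint J J')
    {L : PartData} (hL : IsNCPartition J L) (hV : V ∈ ncRefinements l) :
    (L ∪ V).filter (· ⊆ J) = L ∧ (L ∪ V).filter (fun u => ¬ u ⊆ J) = V ∧
      ∀ J' ∈ l, (L ∪ V).filter (· ⊆ J') = V.filter (· ⊆ J') := by
  have outside : ∀ u ∈ V, ¬ u ⊆ J := fun u hu => by
    obtain ⟨J', hJ', huJ'⟩ := (mem_ncRefinements.mp hV).1 u hu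
    exact not_subset_of_disjoint (hJ J' hJ') (nonempty_of_mem_ncRefinements hV hu) huJ'
  simp only [filter_union]
  refine ⟨?_, ?_, fun J' hJ' => ?_⟩
  · rw [filter_true_of_mem fun u hu => hL.subset_of_mem hu, filter_false_of_mem outside,
      union_empty]
  · rw [filter_false_of_mem fun u hu => not_not.mpr (hL.subset_of_mem hu),
      filter_true_of_mem outside, empty_union]
  · rw [filter_false_of_mem fun u hu => not_subset_of_disjoint (hJ J' hJ').symm
      (hL.nonempty_of_mem hu) (hL.subset_of_mem hu), empty_union]

lemma sum_ncRefinements_cons {M : Type*} [AddCommMonoid M] {J : Finset ℕ}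
    (hJ : ∀ J' ∈ l, Disjoint J J') (f : PartData → M) :
    ∑ V ∈ ncRefinements (J :: l), f V =
      ∑ p ∈ ncPartitions J ×ˢ ncRefinements l, f (p.1 ∪ p.2) := by
  refine sum_nbij' (fun V => (V.filter (· ⊆ J), V.filter (fun u => ¬ u ⊆ J)))
    (fun p => p.1 ∪ p.2) ?_ ?_ ?_ ?_ ?_
  · intro V hV
    obtain ⟨hcov, hnc⟩ := mem_ncRefinements.mp hV
    have hfilter {J'} (hJ' : J' ∈ l) :
        (V.filter fun u => ¬ u ⊆ J).filter (· ⊆ J') = V.filter (· ⊆ J') := by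
      rw [filter_filter]
      exact filter_congr fun u hu => and_iff_right_of_imp fun h =>
        not_subset_of_disjoint (hJ J' hJ') (nonempty_of_mem_ncRefinements hV hu) h
    refine mem_product.mpr ⟨mem_ncPartitions.mpr (hnc J List.mem_cons_self),
      mem_ncRefinements.mpr ⟨fun u hu => ?_, fun J' hJ' => ?_⟩⟩
    · obtain ⟨hu, huJ⟩ := mem_filter.mp hu
      obtain ⟨J', hJ', huJ'⟩ := hcov u hu
      rcases List.mem_cons.mp hJ' with rfl | hJ'
      · exact absurd huJ' huJ
      · exact ⟨J', hJ', huJ'⟩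
    · rw [hfilter hJ']
      exact hnc J' (List.mem_cons_of_mem J hJ')
  · rintro ⟨L, V⟩ hp
    obtain ⟨hL, hV⟩ := mem_product.mp hp
    have hL := mem_ncPartitions.mp hL
    obtain ⟨hLJ, -, hl⟩ := filter_union_of_mem_ncRefinements hJ hL hV
    obtain ⟨hcov, hnc⟩ := mem_ncRefinements.mp hV
    refine mem_ncRefinements.mpr ⟨fun u hu => ?_, fun J' hJ' => ?_⟩
    · rcases mem_union.mp hu with hu | hu
      · exact ⟨J, List.mem_cons_self, hL.subset_of_mem hu⟩
      · obtain ⟨J', hJ', huJ'⟩ := hcov u hu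
        exact ⟨J', List.mem_cons_of_mem J hJ', huJ'⟩
    · rcases List.mem_cons.mp hJ' with rfl | hJ'
      · rw [hLJ]; exact hL
      · rw [hl J' hJ']; exact hnc J' hJ'
  · exact fun V _ => filter_union_filter_not_eq _ V
  · rintro ⟨L, V⟩ hp
    obtain ⟨hL, hV⟩ := mem_product.mp hp
    obtain ⟨h₁, h₂, -⟩ := filter_union_of_mem_ncRefinements hJ (mem_ncPartitions.mp hL) hV
    exact Prod.ext h₁ h₂
  · exact fun _ _ => by rw [filter_union_filter_not_eq]

lemma sum_ncRefinements_prod {R : Type*} [Semiring R] (F : Finset ℕ → PartData → R)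
    (hl : l.Pairwise Disjoint) :
    ∑ V ∈ ncRefinements l, (l.map fun J => F J (V.filter (· ⊆ J))).prod =
      (l.map fun J => ∑ L ∈ ncPartitions J, F J L).prod := by
  induction l with
  | nil => simp [ncRefinements_nil]
  | cons J l ih =>
    obtain ⟨hJ, hl⟩ := List.pairwise_cons.mp hl
    rw [sum_ncRefinements_cons hJ, sum_product, List.map_cons, List.prod_cons, ← ih hl,
      sum_mul_sum]
    refine sum_congr rfl fun L hL => sum_congr rfl fun V hV => ?_
    obtain ⟨hLJ, -, hfilter⟩ := filter_union_of_mem_ncRefinements hJ (mem_ncPartitions.mp hL) hV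
    rw [List.map_cons, List.prod_cons, hLJ,
      List.map_congr_left fun J' hJ' => by rw [hfilter J' hJ']]

end Refinements

section Decomposition

variable {X S : Finset ℕ} {P Q L V : PartData}

/-- A point `s` of a block `q ∈ Q` lying between two points of a block `u ∉ Q` forces, by
non-crossing, all of `q` between them, i.e. `q <_P u`, which admissibility forbids. -/
lemma not_between_of_adm (hP : IsNCPartition X P) (hQ : Q ⊆ P) (hadm : Adm Q (P \ Q))
    {u : Finset ℕ} (hu : u ∈ P \ Q) {x y s : ℕ} (hx : x ∈ u) (hy : y ∈ u)
    (hs : s ∈ Q.sup id) : ¬ (x < s ∧ s < y) := by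
  rintro ⟨hxs, hsy⟩
  obtain ⟨q, hq, hsq⟩ := mem_sup.mp hs
  obtain ⟨huP, huQ⟩ := mem_sdiff.mp hu
  have hqu : q ≠ u := fun h => huQ (h ▸ hq)
  have hdisj := disjoint_left.mp (hP.disjoint q (hQ hq) u huP hqu)
  refine hadm q hq u hu fun t ht => ⟨⟨x, hx, ?_⟩, ⟨y, hy, ?_⟩⟩
  · by_contra! h
    rcases h.eq_or_lt with rfl | h
    · exact hdisj ht hx
    · exact hP.noCrossing q (hQ hq) u huP hqu t ht s hsq x hx y hy ⟨h, hxs, hsy⟩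
  · by_contra! h
    rcases h.eq_or_lt with rfl | h
    · exact hdisj ht hy
    · exact hP.noCrossing u huP q (hQ hq) hqu.symm x hx y hy s hsq t ht ⟨hxs, hsy, h⟩

lemma sdiff_subset_compOf (hP : IsNCPartition X P) (hQ : Q ⊆ P) (hadm : Adm Q (P \ Q))
    {u : Finset ℕ} (hu : u ∈ P \ Q) {x : ℕ} (hx : x ∈ u) :
    u ⊆ compOf (Q.sup id) (X \ Q.sup id) x := by
  obtain ⟨huP, huQ⟩ := mem_sdiff.mp hu
  have huT : u ⊆ X \ Q.sup id := fun y hy => mem_sdiff.mpr ⟨hP.subset_of_mem huP hy, fun hyS => by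
    obtain ⟨q, hq, hyq⟩ := mem_sup.mp hyS
    exact disjoint_left.mp (hP.disjoint q (hQ hq) u huP fun h => huQ (h ▸ hq)) hyq hy⟩
  intro y hy
  refine mem_compOf_s13.mpr ⟨huT hy, fun s hs => ?_⟩
  rcases le_total x y with h | h
  · simpa [h] using not_between_of_adm hP hQ hadm hu hx hy hs
  · simpa [h] using not_between_of_adm hP hQ hadm hu hy hx hs

lemma sdiff_mem_ncRefinements (hP : IsNCPartition X P) (hQ : Q ⊆ P) (hadm : Adm Q (P \ Q)) :
    P \ Q ∈ ncRefinements (comps (Q.sup id) (X \ Q.sup id)) := by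
  have hST : Disjoint (Q.sup id) (X \ Q.sup id) := disjoint_sdiff
  refine mem_ncRefinements.mpr ⟨fun u hu => ?_, fun J hJ => ?_⟩
  · obtain ⟨x, hx⟩ := hP.nonempty_of_mem (mem_sdiff.mp hu).1
    have hsub := sdiff_subset_compOf hP hQ hadm hu hx
    exact ⟨_, compOf_mem_comps (mem_compOf_s13.mp (hsub hx)).1, hsub⟩
  · have hsup : ((P \ Q).filter (· ⊆ J)).sup id = J := by
      refine (Finset.sup_le fun B hB => (mem_filter.mp hB).2).antisymm fun x hxJ => ?_
      obtain ⟨hxX, hxS⟩ := mem_sdiff.mp (subset_of_mem_comps hJ hxJ)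
      obtain ⟨B, hB, hxB⟩ := mem_sup.mp (hP.sup_eq ▸ hxX : x ∈ P.sup id)
      have hBU : B ∈ P \ Q := mem_sdiff.mpr ⟨hB, fun h => hxS (mem_sup.mpr ⟨B, h, hxB⟩)⟩
      rw [eq_compOf_of_mem_comps hST hJ hxJ]
      exact mem_sup.mpr ⟨B, mem_filter.mpr ⟨hBU, sdiff_subset_compOf hP hQ hadm hBU hxB⟩, hxB⟩
    have := hP.mono ((filter_subset (· ⊆ J) (P \ Q)).trans sdiff_subset)
    rwa [hsup] at this

lemma sup_eq_of_mem_ncRefinements {T : Finset ℕ} (hV : V ∈ ncRefinements (comps S T)) :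
    V.sup id = T := by
  obtain ⟨hcov, hnc⟩ := mem_ncRefinements.mp hV
  refine (Finset.sup_le fun u hu => ?_).antisymm fun x hx => ?_
  · obtain ⟨J, hJ, huJ⟩ := hcov u hu
    exact huJ.trans (subset_of_mem_comps hJ)
  · have hx' := (hnc _ (compOf_mem_comps hx)).sup_eq ▸ self_mem_compOf hx
    obtain ⟨u, hu, hxu⟩ := mem_sup.mp hx'
    exact mem_sup.mpr ⟨u, (mem_filter.mp hu).1, hxu⟩

lemma disjoint_of_mem_ncRefinements (hL : IsNCPartition S L)
    (hV : V ∈ ncRefinements (comps S (X \ S))) : Disjoint L V :=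
  disjoint_left.mpr fun B hB hBV => by
    obtain ⟨x, hx⟩ := hL.nonempty_of_mem hB
    obtain ⟨J, hJ, hBJ⟩ := (mem_ncRefinements.mp hV).1 B hBV
    exact (mem_sdiff.mp (subset_of_mem_comps hJ (hBJ hx))).2 (hL.subset_of_mem hB hx)

lemma subset_of_mem_ncRefinements {T J B : Finset ℕ} (hST : Disjoint S T)
    (hV : V ∈ ncRefinements (comps S T)) (hB : B ∈ V) (hJ : J ∈ comps S T) {x : ℕ}
    (hx : x ∈ B) (hxJ : x ∈ J) : B ⊆ J := by
  obtain ⟨J', hJ', hBJ'⟩ := (mem_ncRefinements.mp hV).1 B hB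
  rwa [eq_of_mem_comps hST hJ hJ' hxJ (hBJ' hx)]

lemma isNCPartition_union (hS : S ⊆ X) (hL : IsNCPartition S L)
    (hV : V ∈ ncRefinements (comps S (X \ S))) : IsNCPartition X (L ∪ V) := by
  have hST : Disjoint S (X \ S) := disjoint_sdiff
  obtain ⟨hcov, hnc⟩ := mem_ncRefinements.mp hV
  have hVT {B x} (hB : B ∈ V) (hx : x ∈ B) : x ∈ X \ S := by
    obtain ⟨J, hJ, hBJ⟩ := hcov B hB
    exact subset_of_mem_comps hJ (hBJ hx)
  have hLV {B B'} (hB : B ∈ L) (hB' : B' ∈ V) : Disjoint B B' :=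
    disjoint_left.mpr fun x hx hx' => (mem_sdiff.mp (hVT hB' hx')).2 (hL.subset_of_mem hB hx)
  refine ⟨?_, ?_, ?_, ?_⟩
  · rw [mem_union, not_or]
    exact ⟨hL.empty_notMem, fun h => not_nonempty_empty (nonempty_of_mem_ncRefinements hV h)⟩
  · intro B hB B' hB' hne
    rcases mem_union.mp hB with hB | hB <;> rcases mem_union.mp hB' with hB' | hB'
    · exact hL.disjoint B hB B' hB' hne
    · exact hLV hB hB'
    · exact (hLV hB' hB).symm
    · refine disjoint_left.mpr fun x hx hx' => ?_
      obtain ⟨J, hJ, hBJ⟩ := hcov B hB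
      have hB'J := subset_of_mem_ncRefinements hST hV hB' hJ hx' (hBJ hx)
      exact disjoint_left.mp ((hnc J hJ).disjoint B (mem_filter.mpr ⟨hB, hBJ⟩)
        B' (mem_filter.mpr ⟨hB', hB'J⟩) hne) hx hx'
  · rw [sup_union, hL.sup_eq, sup_eq_of_mem_ncRefinements hV]
    exact union_sdiff_of_subset hS
  · intro B hB B' hB' hne p₁ hp₁ p₂ hp₂ q₁ hq₁ q₂ hq₂ hcr
    rcases mem_union.mp hB with hB | hB <;> rcases mem_union.mp hB' with hB' | hB'
    · exact hL.noCrossing B hB B' hB' hne p₁ hp₁ p₂ hp₂ q₁ hq₁ q₂ hq₂ hcr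
    · obtain ⟨J, hJ, hB'J⟩ := hcov B' hB'
      exact not_between_of_mem_comps hST hJ (hB'J hq₁) (hB'J hq₂) (hL.subset_of_mem hB hp₂)
        ⟨hcr.2.1, hcr.2.2⟩
    · obtain ⟨J, hJ, hBJ⟩ := hcov B hB
      exact not_between_of_mem_comps hST hJ (hBJ hp₁) (hBJ hp₂) (hL.subset_of_mem hB' hq₁)
        ⟨hcr.1, hcr.2.1⟩
    · obtain ⟨J, hJ, hBJ⟩ := hcov B hB
      have hB'J := subset_of_mem_ncRefinements hST hV hB' hJ hq₁
        (mem_of_between_of_mem_comps hST hJ (hBJ hp₁) (hBJ hp₂) (hVT hB' hq₁) ⟨hcr.1, hcr.2.1⟩)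
      exact (hnc J hJ).noCrossing B (mem_filter.mpr ⟨hB, hBJ⟩) B' (mem_filter.mpr ⟨hB', hB'J⟩)
        hne p₁ hp₁ p₂ hp₂ q₁ hq₁ q₂ hq₂ hcr

lemma adm_of_mem_ncRefinements (hL : IsNCPartition S L)
    (hV : V ∈ ncRefinements (comps S (X \ S))) : Adm L V := by
  intro q hq u hu hnest
  obtain ⟨J, hJ, huJ⟩ := (mem_ncRefinements.mp hV).1 u hu
  obtain ⟨x, hx⟩ := hL.nonempty_of_mem hq
  obtain ⟨⟨a, ha, hax⟩, ⟨b, hb, hxb⟩⟩ := hnest x hx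
  exact not_between_of_mem_comps disjoint_sdiff hJ (huJ ha) (huJ hb) (hL.subset_of_mem hq hx)
    ⟨hax, hxb⟩

lemma sum_admissible_decompositions {M : Type*} [AddCommMonoid M] (X : Finset ℕ)
    (cond : Finset ℕ → Prop) [DecidablePred cond] (F : Finset ℕ → PartData → PartData → M) :
    ∑ P ∈ ncPartitions X, ∑ Q ∈ P.powerset.filter (fun Q => Adm Q (P \ Q) ∧ cond (Q.sup id)),
        F (Q.sup id) Q (P \ Q) =
      ∑ S ∈ X.powerset.filter cond, ∑ L ∈ ncPartitions S,
        ∑ V ∈ ncRefinements (comps S (X \ S)), F S L V := by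
  simp_rw [← sum_product' (ncPartitions _) (ncRefinements _)]
  rw [sum_sigma', sum_sigma']
  refine sum_nbij' (fun x => ⟨x.2.sup id, (x.2, x.1 \ x.2)⟩) (fun y => ⟨y.2.1 ∪ y.2.2, y.2.1⟩)
    ?_ ?_ ?_ ?_ fun _ _ => rfl
  · rintro ⟨P, Q⟩ hx
    simp only [mem_sigma, mem_filter, mem_powerset, mem_product, mem_ncPartitions] at hx ⊢
    obtain ⟨hP, hQ, hadm, hcond⟩ := hx
    exact ⟨⟨hP.sup_eq ▸ sup_mono hQ, hcond⟩, hP.mono hQ, sdiff_mem_ncRefinements hP hQ hadm⟩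
  · rintro ⟨S, L, V⟩ hy
    simp only [mem_sigma, mem_filter, mem_powerset, mem_product, mem_ncPartitions] at hy ⊢
    obtain ⟨⟨hS, hcond⟩, hL, hV⟩ := hy
    rw [union_sdiff_cancel_left (disjoint_of_mem_ncRefinements hL hV), hL.sup_eq]
    exact ⟨isNCPartition_union hS hL hV, subset_union_left, adm_of_mem_ncRefinements hL hV,
      hcond⟩
  · rintro ⟨P, Q⟩ hx
    simp only [mem_sigma, mem_filter, mem_powerset] at hx
    simp only [union_sdiff_of_subset hx.2.1]
  · rintro ⟨S, L, V⟩ hy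
    simp only [mem_sigma, mem_product, mem_ncPartitions] at hy
    simp only [union_sdiff_cancel_left (disjoint_of_mem_ncRefinements hy.2.1 hy.2.2),
      hy.2.1.sup_eq]

end Decomposition

noncomputable section Splitting

variable {K : Type*} [Field K] {A : Type*} [Ring A] [Algebra K A]

variable (K) in
lemma sum_NCset_coproduct_terms (m : ℕ) (a : ℕ → A) (cond : Finset ℕ → Prop)
    [DecidablePred cond] :
    ∑ P ∈ NCset m, ∑ Q ∈ P.powerset.filter (fun Q => Adm Q (P \ Q) ∧ cond (Q.sup id)),
        dsub K A a (stdParts Q) (Q.sup id) ⊗ₜ[K]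
          ((comps (Q.sup id) (P.sup id \ Q.sup id)).map fun J =>
            dsub K A a (stdParts ((P \ Q).filter (· ⊆ J))) J).prod =
      ∑ S ∈ (range m).powerset.filter cond,
        (∑ L ∈ NCset S.card, dsub K A a L S) ⊗ₜ[K]
          ((comps S (range m \ S)).map fun J => ∑ L ∈ NCset J.card, dsub K A a L J).prod := by
  rw [NCset_eq_ncPartitions,
    sum_congr rfl fun P hP => sum_congr rfl fun Q _ => by rw [(mem_ncPartitions.mp hP).sup_eq],
    sum_admissible_decompositions (range m) cond fun S L V =>
    dsub K A a (stdParts L) S ⊗ₜ[K]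
      ((comps S (range m \ S)).map fun J => dsub K A a (stdParts (V.filter (· ⊆ J))) J).prod]
  refine sum_congr rfl fun S _ => ?_
  simp_rw [← TensorProduct.tmul_sum, ← TensorProduct.sum_tmul]
  rw [sum_ncRefinements_prod (fun J L => dsub K A a (stdParts L) J)
    (pairwise_disjoint_comps disjoint_sdiff), sum_ncPartitions_stdParts S fun L => dsub K A a L S,
    List.map_congr_left fun J _ => sum_ncPartitions_stdParts J fun L => dsub K A a L J]

variable (K A) in
lemma span_range_tvec :
    Submodule.span K (Set.range fun p : ℕ × (ℕ → A) => tvec K A p.1 p.2) = ⊤ := by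
  refine Submodule.eq_top_iff'.mpr fun v => ?_
  induction v using DirectSum.induction_on with
  | zero => exact zero_mem _
  | add x y hx hy => exact add_mem hx hy
  | of n t =>
    induction t using PiTensorProduct.induction_on with
    | smul_tprod r f =>
      rw [← DirectSum.lof_eq_of K, map_smul]
      refine Submodule.smul_mem _ r
        (Submodule.subset_span ⟨(n, fun i => if h : i < n + 1 then f ⟨i, h⟩ else 0), ?_⟩)
      simp [tvec, DirectSum.lof_eq_of, Fin.is_le]
    | add x y hx hy =>
      rw [map_add]
      exact add_mem hx hy

lemma Tpos_linearMap_ext {M : Type*} [AddCommMonoid M] [Module K M] {f g : Tpos K A →ₗ[K] M}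
    (h : ∀ n a, f (tvec K A n a) = g (tvec K A n a)) : f = g :=
  LinearMap.ext_on_range (span_range_tvec K A) fun p => h p.1 p.2

lemma TT_algHom_ext {B : Type*} [Semiring B] [Algebra K B] {f g : TT K A →ₐ[K] B}
    (h : ∀ n a, f (wrd K A (n + 1) a) = g (wrd K A (n + 1) a)) : f = g :=
  TensorAlgebra.hom_ext (Tpos_linearMap_ext h)

def IsSplittingMap (Sp : TT K A →ₐ[K] TNA K A) : Prop :=
  ∀ (m : ℕ) (a : ℕ → A), Sp (wrd K A m a) = spWord K A m a

variable {Sp : TT K A →ₐ[K] TNA K A}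

lemma splitting_ι_mem_range (hSp : IsSplittingMap Sp) (v : Tpos K A) : Sp (TensorAlgebra.ι K v) ∈ LinearMap.range (TensorAlgebra.ι K) := by
  suffices ⊤ ≤ (LinearMap.range (TensorAlgebra.ι K)).comap
      (Sp.toLinearMap ∘ₗ TensorAlgebra.ι K) from this Submodule.mem_top
  rw [← span_range_tvec K A, Submodule.span_le]
  rintro _ ⟨⟨n, a⟩, rfl⟩
  refine ⟨∑ P ∈ NCset (n + 1), dvec K A P n a, ?_⟩
  simp only [map_sum, LinearMap.comp_apply, AlgHom.toLinearMap_apply]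
  exact (hSp (n + 1) a).symm

lemma splitting_sw (hSp : IsSplittingMap Sp)
    (a : ℕ → A) (S : Finset ℕ) : Sp (sw K A a S) = ∑ L ∈ NCset S.card, dsub K A a L S := by
  rw [sw, hSp]
  rfl

lemma map_splitting_coproduct_terms
    (hSp : IsSplittingMap Sp) (m : ℕ) (a : ℕ → A)
    (cond : Finset ℕ → Prop) [DecidablePred cond] :
    Algebra.TensorProduct.map Sp Sp (∑ S ∈ (range m).powerset.filter cond,
        sw K A a S ⊗ₜ[K] ((comps S (range m \ S)).map (sw K A a)).prod) =
      ∑ P ∈ NCset m, ∑ Q ∈ P.powerset.filter (fun Q => Adm Q (P \ Q) ∧ cond (Q.sup id)),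
        dsub K A a (stdParts Q) (Q.sup id) ⊗ₜ[K]
          ((comps (Q.sup id) (P.sup id \ Q.sup id)).map fun J =>
            dsub K A a (stdParts ((P \ Q).filter (· ⊆ J))) J).prod := by
  simp only [sum_NCset_coproduct_terms, map_sum, Algebra.TensorProduct.map_tmul, map_list_prod,
    List.map_map, Function.comp_def, splitting_sw hSp]

lemma coproduct_splitting_wrd
    (hSp : IsSplittingMap Sp)
    (ΔN : TNA K A →ₐ[K] TNA K A ⊗[K] TNA K A)
    (hΔN : ∀ (m : ℕ) (P : PartData) (a : ℕ → A), IsNCP m P → ΔN (dgen K A P m a) = dcopF K A P a)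
    (m : ℕ) (a : ℕ → A) :
    ΔN (Sp (wrd K A m a)) = Algebra.TensorProduct.map Sp Sp (wcopF K A m a) := by
  rw [hSp, spWord, map_sum, sum_congr rfl fun P hP =>
    hΔN m P a (isNCP_iff_isNCPartition.mpr (mem_NCset.mp hP)), wcopF,
    ← filter_true (range m).powerset,
    map_splitting_coproduct_terms hSp m a]
  simp only [dcopF, and_true]

lemma leftHalfCoproduct_splitting_wrd
    (hSp : IsSplittingMap Sp)
    (ΔpN : TNA K A →ₗ[K] TNA K A ⊗[K] TNA K A)
    (hpN : ∀ (m : ℕ) (P : PartData) (a : ℕ → A), IsNCP m P → ΔpN (dgen K A P m a) = dcopP K A P a)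
    (m : ℕ) (a : ℕ → A) :
    ΔpN (Sp (wrd K A m a)) = Algebra.TensorProduct.map Sp Sp (wcopP K A m a) := by
  rw [hSp, spWord, map_sum, sum_congr rfl fun P hP =>
    hpN m P a (isNCP_iff_isNCPartition.mpr (mem_NCset.mp hP)), wcopP,
    map_splitting_coproduct_terms hSp m a]
  simp only [dcopP, mem_sup, id]

lemma rightHalfCoproduct_splitting_wrd
    (hSp : IsSplittingMap Sp)
    (ΔsN : TNA K A →ₗ[K] TNA K A ⊗[K] TNA K A)
    (hsN : ∀ (m : ℕ) (P : PartData) (a : ℕ → A), IsNCP m P → ΔsN (dgen K A P m a) = dcopS K A P a)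
    (m : ℕ) (a : ℕ → A) :
    ΔsN (Sp (wrd K A (m + 1) a)) = Algebra.TensorProduct.map Sp Sp (wcopS K A (m + 1) a) := by
  rw [hSp, spWord, map_sum, sum_congr rfl fun P hP =>
    hsN _ P a (isNCP_iff_isNCPartition.mpr (mem_NCset.mp hP)), wcopS,
    map_splitting_coproduct_terms hSp _ a]
  refine sum_congr rfl fun P hP => ?_
  rw [dcopS]
  refine sum_congr (filter_congr fun Q hQ => and_congr_right fun _ => ?_) fun _ _ => rfl
  exact (mem_NCset.mp hP).exists_mem_sdiff_iff (mem_powerset.mp hQ) (mem_range.mpr m.succ_pos)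

lemma halfCoproduct_splitting_of_letters
    (ΔN : TNA K A →ₐ[K] TNA K A ⊗[K] TNA K A) (ΔT : TT K A →ₐ[K] TT K A ⊗[K] TT K A)
    (hΔ : ∀ x, ΔN (Sp x) = Algebra.TensorProduct.map Sp Sp (ΔT x))
    (DN : TNA K A →ₗ[K] TNA K A ⊗[K] TNA K A) (DT : TT K A →ₗ[K] TT K A ⊗[K] TT K A)
    (hDN : ∀ v y, DN (TensorAlgebra.ι K v * y) = DN (TensorAlgebra.ι K v) * ΔN y)
    (hDT : ∀ v y, DT (TensorAlgebra.ι K v * y) = DT (TensorAlgebra.ι K v) * ΔT y)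
    (hletter : ∀ v, Sp (TensorAlgebra.ι K v) ∈ LinearMap.range (TensorAlgebra.ι K))
    (hgen : ∀ n a, DN (Sp (wrd K A (n + 1) a)) =
      Algebra.TensorProduct.map Sp Sp (DT (wrd K A (n + 1) a))) :
    ∀ x ∈ TIdeal K A, DN (Sp x) = Algebra.TensorProduct.map Sp Sp (DT x) := by
  have hι (v : Tpos K A) := LinearMap.congr_fun (Tpos_linearMap_ext
    (f := DN ∘ₗ Sp.toLinearMap ∘ₗ TensorAlgebra.ι K)
    (g := (Algebra.TensorProduct.map Sp Sp).toLinearMap ∘ₗ DT ∘ₗ TensorAlgebra.ι K) hgen) v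
  refine fun x hx => LinearMap.eqOn_span (f := DN ∘ₗ Sp.toLinearMap)
    (g := (Algebra.TensorProduct.map Sp Sp).toLinearMap ∘ₗ DT) ?_ hx
  rintro _ ⟨v, y, rfl⟩
  obtain ⟨w, hw⟩ := hletter v
  simp only [LinearMap.comp_apply, AlgHom.toLinearMap_apply] at hι ⊢
  rw [map_mul, ← hw, hDN, hw, hι, hΔ, hDT, map_mul]

end Splitting

theorem splitting_map_is_unshuffle_bialgebra_morphism_general
    (K : Type*) [Field K] (A : Type*) [Ring A] [Algebra K A]
    -- the coproduct and half-coproducts of T̄(T(A))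
    (ΔT : TT K A →ₐ[K] TT K A ⊗[K] TT K A)
    (hΔT : ∀ (m : ℕ) (a : ℕ → A), ΔT (wrd K A m a) = wcopF K A m a)
    (ΔpT ΔsT : TT K A →ₗ[K] TT K A ⊗[K] TT K A)
    (hpTgen : ∀ (m : ℕ) (a : ℕ → A), ΔpT (wrd K A (m + 1) a) = wcopP K A (m + 1) a)
    (hsTgen : ∀ (m : ℕ) (a : ℕ → A), ΔsT (wrd K A (m + 1) a) = wcopS K A (m + 1) a)
    (hpText : ∀ (v : Tpos K A) (y : TT K A),
      ΔpT (TensorAlgebra.ι K v * y) = ΔpT (TensorAlgebra.ι K v) * ΔT y)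
    (hsText : ∀ (v : Tpos K A) (y : TT K A),
      ΔsT (TensorAlgebra.ι K v * y) = ΔsT (TensorAlgebra.ι K v) * ΔT y)
    -- the coproduct and half-coproducts of T̄(NC(A))
    (ΔN : TNA K A →ₐ[K] TNA K A ⊗[K] TNA K A)
    (hΔN : ∀ (m : ℕ) (P : PartData) (a : ℕ → A), IsNCP m P →
      ΔN (dgen K A P m a) = dcopF K A P a)
    (ΔpN ΔsN : TNA K A →ₗ[K] TNA K A ⊗[K] TNA K A)
    (hpNgen : ∀ (m : ℕ) (P : PartData) (a : ℕ → A), IsNCP m P →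
      ΔpN (dgen K A P m a) = dcopP K A P a)
    (hsNgen : ∀ (m : ℕ) (P : PartData) (a : ℕ → A), IsNCP m P →
      ΔsN (dgen K A P m a) = dcopS K A P a)
    (hpNext : ∀ (v : NCA K A) (y : TNA K A),
      ΔpN (TensorAlgebra.ι K v * y) = ΔpN (TensorAlgebra.ι K v) * ΔN y)
    (hsNext : ∀ (v : NCA K A) (y : TNA K A),
      ΔsN (TensorAlgebra.ι K v * y) = ΔsN (TensorAlgebra.ι K v) * ΔN y)
    -- the splitting map
    (Sp : TT K A →ₐ[K] TNA K A)
    (hSp : ∀ (m : ℕ) (a : ℕ → A), Sp (wrd K A m a) = spWord K A m a) :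
    -- Sp is multiplicative and unital
    (∀ x y : TT K A, Sp (x * y) = Sp x * Sp y) ∧ (Sp 1 = 1) ∧
    -- Δ ∘ Sp = (Sp ⊗ Sp) ∘ Δ
    (∀ x : TT K A, ΔN (Sp x) = (Algebra.TensorProduct.map Sp Sp) (ΔT x)) ∧
    -- Δ_≺⁺ ∘ Sp = (Sp ⊗ Sp) ∘ Δ_≺⁺
    (∀ x ∈ TIdeal K A, ΔpN (Sp x) = (Algebra.TensorProduct.map Sp Sp) (ΔpT x)) ∧
    -- Δ_≻⁺ ∘ Sp = (Sp ⊗ Sp) ∘ Δ_≻⁺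
    (∀ x ∈ TIdeal K A, ΔsN (Sp x) = (Algebra.TensorProduct.map Sp Sp) (ΔsT x)) := by
  have hcomp : ΔN.comp Sp = (Algebra.TensorProduct.map Sp Sp).comp ΔT :=
    TT_algHom_ext fun n a => by
      simp only [AlgHom.comp_apply, hΔT, coproduct_splitting_wrd hSp ΔN hΔN]
  have hΔ (x : TT K A) : ΔN (Sp x) = Algebra.TensorProduct.map Sp Sp (ΔT x) :=
    AlgHom.congr_fun hcomp x
  refine ⟨map_mul Sp, map_one Sp, hΔ, ?_, ?_⟩
  · refine halfCoproduct_splitting_of_letters ΔN ΔT hΔ ΔpN ΔpT hpNext hpText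
      (splitting_ι_mem_range hSp) fun n a => ?_
    rw [hpTgen, leftHalfCoproduct_splitting_wrd hSp ΔpN hpNgen]
  · refine halfCoproduct_splitting_of_letters ΔN ΔT hΔ ΔsN ΔsT hsNext hsText
      (splitting_ι_mem_range hSp) fun n a => ?_
    rw [hsTgen, rightHalfCoproduct_splitting_wrd hSp ΔsN hsNgen]

/-- The splitting map `Sp : T̄(T(A)) → T̄(NC(A))`,
`Sp(a₁⋯aₙ) = Σ_{L∈NC_n} L⊗(a₁⋯aₙ)` extended multiplicatively, is a morphism of
unshuffle bialgebras: it is multiplicative and unital, and it intertwines the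
coproducts and half-coproducts. -/
theorem splitting_map_is_unshuffle_bialgebra_morphism
    (K : Type*) [Field K] [CharZero K] (A : Type*) [Ring A] [Algebra K A]
    -- the coproduct and half-coproducts of T̄(T(A))
    (ΔT : TT K A →ₐ[K] TT K A ⊗[K] TT K A)
    (hΔT : ∀ (m : ℕ) (a : ℕ → A), ΔT (wrd K A m a) = wcopF K A m a)
    (ΔpT ΔsT : TT K A →ₗ[K] TT K A ⊗[K] TT K A)
    (hpTgen : ∀ (m : ℕ) (a : ℕ → A), ΔpT (wrd K A (m + 1) a) = wcopP K A (m + 1) a)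
    (hsTgen : ∀ (m : ℕ) (a : ℕ → A), ΔsT (wrd K A (m + 1) a) = wcopS K A (m + 1) a)
    (hpText : ∀ (v : Tpos K A) (y : TT K A),
      ΔpT (TensorAlgebra.ι K v * y) = ΔpT (TensorAlgebra.ι K v) * ΔT y)
    (hsText : ∀ (v : Tpos K A) (y : TT K A),
      ΔsT (TensorAlgebra.ι K v * y) = ΔsT (TensorAlgebra.ι K v) * ΔT y)
    -- the coproduct and half-coproducts of T̄(NC(A))
    (ΔN : TNA K A →ₐ[K] TNA K A ⊗[K] TNA K A)
    (hΔN : ∀ (m : ℕ) (P : PartData) (a : ℕ → A), IsNCP m P →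
      ΔN (dgen K A P m a) = dcopF K A P a)
    (ΔpN ΔsN : TNA K A →ₗ[K] TNA K A ⊗[K] TNA K A)
    (hpNgen : ∀ (m : ℕ) (P : PartData) (a : ℕ → A), IsNCP m P →
      ΔpN (dgen K A P m a) = dcopP K A P a)
    (hsNgen : ∀ (m : ℕ) (P : PartData) (a : ℕ → A), IsNCP m P →
      ΔsN (dgen K A P m a) = dcopS K A P a)
    (hpNext : ∀ (v : NCA K A) (y : TNA K A),
      ΔpN (TensorAlgebra.ι K v * y) = ΔpN (TensorAlgebra.ι K v) * ΔN y)
    (hsNext : ∀ (v : NCA K A) (y : TNA K A),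
      ΔsN (TensorAlgebra.ι K v * y) = ΔsN (TensorAlgebra.ι K v) * ΔN y)
    -- the splitting map
    (Sp : TT K A →ₐ[K] TNA K A)
    (hSp : ∀ (m : ℕ) (a : ℕ → A), Sp (wrd K A m a) = spWord K A m a) :
    -- Sp is multiplicative and unital
    (∀ x y : TT K A, Sp (x * y) = Sp x * Sp y) ∧ (Sp 1 = 1) ∧
    -- Δ ∘ Sp = (Sp ⊗ Sp) ∘ Δ
    (∀ x : TT K A, ΔN (Sp x) = (Algebra.TensorProduct.map Sp Sp) (ΔT x)) ∧
    -- Δ_≺⁺ ∘ Sp = (Sp ⊗ Sp) ∘ Δ_≺⁺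
    (∀ x ∈ TIdeal K A, ΔpN (Sp x) = (Algebra.TensorProduct.map Sp Sp) (ΔpT x)) ∧
    -- Δ_≻⁺ ∘ Sp = (Sp ⊗ Sp) ∘ Δ_≻⁺
    (∀ x ∈ TIdeal K A, ΔsN (Sp x) = (Algebra.TensorProduct.map Sp Sp) (ΔsT x)) :=
  splitting_map_is_unshuffle_bialgebra_morphism_general K A ΔT hΔT ΔpT ΔsT hpTgen hsTgen hpText
    hsText ΔN hΔN ΔpN ΔsN hpNgen hsNgen hpNext hsNext Sp hSp
end

section
/- Let K be a commutative ring, (kₙ)_{n≥1} a sequence in K, and define (mₙ)_{n≥0} by m₀ = 1 and, for n ≥ 1, mₙ = Σ_{s=1}^{n} Σ_{i₁+⋯+i_s = n−s, i_j ≥ 0} k_s · m_{i₁}⋯m_{i_s}. Then for all n ≥ 1, mₙ = Σ_{L ∈ NC_n} ∏_{B block of L} k_{|B|} (the free moment–cumulant relation). -/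
open scoped TensorProduct

/-!
Split a non-crossing partition of `{0, …, n-1}` along the block `{b₀ < ⋯ < b_{s-1}}` of `0`
(so `b₀ = 0`; put `b_s = n`). A block reaching across some `b_{j+1}` from the gap
`(b_j, b_{j+1})` would cross the block of `0`, which starts at `0`, so every other block lies in
one gap, and conversely non-crossing partitions of the gaps glue with the block of
`0` into a non-crossing partition. With gap sizes `t_j = b_{j+1} - b_j - 1` summing to `n - s`,
this bijection rewrites `Σ_{L ∈ NC_n} ∏_B k_{|B|}` as
`Σ_s Σ_t k_s ∏_j Σ_{L ∈ NC_{t_j}} ∏_B k_{|B|}`, the recursion defining `mₙ`; strong induction on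
`n` concludes.
-/

open Finset

namespace NonCrossing

/-- `IsNCP` over an arbitrary ground set: `IsNCP n P` unfolds to `IsNCPOn (range n) P`. -/
def IsNCPOn (S : Finset ℕ) (P : PartData) : Prop :=
  ∅ ∉ P ∧ (∀ B ∈ P, ∀ B' ∈ P, B ≠ B' → Disjoint B B') ∧ P.sup id = S ∧ NoCrossing P

lemma mem_NCset {n : ℕ} {P : PartData} : P ∈ NCset n ↔ IsNCP n P := by
  refine ⟨fun h => (mem_filter.1 h).2, fun h => mem_filter.2 ⟨?_, h⟩⟩
  refine mem_powerset.2 fun B hB => mem_powerset.2 ?_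
  exact h.2.2.1 ▸ le_sup (f := id) hB

lemma NCset_zero : NCset 0 = {∅} := by decide

namespace IsNCPOn

variable {S : Finset ℕ} {P : PartData} (hP : IsNCPOn S P) {B : Finset ℕ}
include hP

lemma subset_of_mem (hB : B ∈ P) : B ⊆ S := hP.2.2.1 ▸ le_sup (f := id) hB

lemma nonempty_of_mem (hB : B ∈ P) : B.Nonempty :=
  nonempty_iff_ne_empty.2 fun he => hP.1 (he ▸ hB)

lemma filter_subset (G : Finset ℕ) (hcover : ∀ x ∈ G, ∃ B ∈ P, x ∈ B ∧ B ⊆ G) :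
    IsNCPOn G (P.filter (· ⊆ G)) := by
  refine ⟨fun h => hP.1 (mem_filter.1 h).1,
    fun B hB B' hB' => hP.2.1 B (mem_filter.1 hB).1 B' (mem_filter.1 hB').1, ?_,
    fun B hB B' hB' => hP.2.2.2 B (mem_filter.1 hB).1 B' (mem_filter.1 hB').1⟩
  refine le_antisymm (Finset.sup_le fun B hB => (mem_filter.1 hB).2) fun x hx => ?_
  obtain ⟨B, hB, hxB, hBG⟩ := hcover x hx
  exact mem_sup.2 ⟨B, mem_filter.2 ⟨hB, hBG⟩, hxB⟩

end IsNCPOn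

def Interleaved (B B' : Finset ℕ) : Prop :=
  ∃ p₁ ∈ B, ∃ p₂ ∈ B, ∃ q₁ ∈ B', ∃ q₂ ∈ B', p₁ < q₁ ∧ q₁ < p₂ ∧ p₂ < q₂

lemma noCrossing_iff {P : PartData} :
    NoCrossing P ↔ ∀ B ∈ P, ∀ B' ∈ P, B ≠ B' → ¬ Interleaved B B' := by
  simp only [NoCrossing, Interleaved, not_exists, not_and]

lemma interleaved_image_iff {f : ℕ → ℕ} (hf : StrictMono f) {B B' : Finset ℕ} :
    Interleaved (B.image f) (B'.image f) ↔ Interleaved B B' := by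
  simp only [Interleaved, exists_mem_image, hf.lt_iff_lt]

lemma isNCPOn_image_iff {f : ℕ → ℕ} (hf : StrictMono f) {S : Finset ℕ} {Q : PartData} :
    IsNCPOn (S.image f) (Q.image (image f)) ↔ IsNCPOn S Q := by
  have himg : Function.Injective (image f : Finset ℕ → Finset ℕ) := image_injective hf.injective
  have hsup : (Q.image (image f)).sup id = (Q.sup id).image f := by
    ext x; simp only [mem_sup, mem_image, id]; grind
  have hempty : ∅ ∈ Q.image (image f) ↔ ∅ ∈ Q := by simp
  simp only [IsNCPOn, noCrossing_iff, hempty, forall_mem_image, himg.ne_iff,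
    disjoint_image hf.injective, interleaved_image_iff hf, hsup, himg.eq_iff]

def shift (c : ℕ) (Q : PartData) : PartData := Q.image (image (· + c))

lemma isNCPOn_shift_iff {a m : ℕ} {Q : PartData} :
    IsNCPOn (Ioo a (a + m + 1)) (shift (a + 1) Q) ↔ IsNCP m Q := by
  have hI : (range m).image (· + (a + 1)) = Ioo a (a + m + 1) := by
    ext x; simp only [mem_image, mem_range, mem_Ioo]
    exact ⟨by rintro ⟨y, hy, rfl⟩; omega, fun h => ⟨x - (a + 1), by omega, by omega⟩⟩
  rw [← hI]
  exact isNCPOn_image_iff fun _ _ h => Nat.add_lt_add_right h _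

lemma shift_image_sub {c : ℕ} {Q : PartData} (hQ : ∀ B ∈ Q, ∀ x ∈ B, c ≤ x) :
    shift c (Q.image (image (· - c))) = Q := by
  rw [shift, image_image]
  refine (image_congr fun B hB => ?_).trans image_id
  rw [Function.comp_apply, image_image]
  refine (image_congr fun x hx => ?_).trans image_id
  simp only [Function.comp_apply, id, Nat.sub_add_cancel (hQ B hB x hx)]

lemma image_sub_shift (c : ℕ) (Q : PartData) : (shift c Q).image (image (· - c)) = Q := by
  rw [shift, image_image]
  refine (image_congr fun B _ => ?_).trans image_id
  simp [image_image, Function.comp_def]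

lemma not_interleaved_of_subset_of_disjoint {G B B' : Finset ℕ} (hG : (G : Set ℕ).OrdConnected)
    (hB : B ⊆ G) (hB' : Disjoint B' G) : ¬ Interleaved B B' ∧ ¬ Interleaved B' B := by
  have between : ∀ {x y z}, x ∈ B → y ∈ B' → z ∈ B → x < y → y < z → False :=
    fun hx hy hz hxy hyz =>
      disjoint_left.1 hB' hy (hG.out (hB hx) (hB hz) ⟨hxy.le, hyz.le⟩)
  constructor
  · rintro ⟨p₁, hp₁, p₂, hp₂, q₁, hq₁, -, -, h₁, h₂, -⟩
    exact between hp₁ hq₁ hp₂ h₁ h₂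
  · rintro ⟨-, -, p₂, hp₂, q₁, hq₁, q₂, hq₂, -, h₂, h₃⟩
    exact between hq₁ hp₂ hq₂ h₂ h₃

section Glue

variable {ι : Type*} [Fintype ι] {B₀ : Finset ℕ} {G : ι → Finset ℕ} {Q : ι → PartData}
  (hB₀ : B₀.Nonempty) (hQ : ∀ i, IsNCPOn (G i) (Q i)) (hB₀G : ∀ i, Disjoint B₀ (G i))
  (hG : Pairwise fun i j => Disjoint (G i) (G j))
include hB₀ hQ hB₀G hG

lemma isNCPOn_insert_biUnion (hconv : ∀ i, (G i : Set ℕ).OrdConnected) :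
    IsNCPOn (B₀ ∪ univ.biUnion G) (insert B₀ (univ.biUnion Q)) := by
  have hsub : ∀ i, ∀ C ∈ Q i, C ⊆ G i := fun i _ hC => (hQ i).subset_of_mem hC
  have separated : ∀ C ∈ insert B₀ (univ.biUnion Q), ∀ C' ∈ insert B₀ (univ.biUnion Q),
      C ≠ C' → Disjoint C C' ∧ ¬ Interleaved C C' := by
    simp only [mem_insert, mem_biUnion, mem_univ, true_and]
    rintro C (rfl | ⟨i, hC⟩) C' (rfl | ⟨j, hC'⟩) hne
    · exact absurd rfl hne
    · exact ⟨(hB₀G j).mono_right (hsub j C' hC'),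
        (not_interleaved_of_subset_of_disjoint (hconv j) (hsub j C' hC') (hB₀G j)).2⟩
    · exact ⟨((hB₀G i).mono_right (hsub i C hC)).symm,
        (not_interleaved_of_subset_of_disjoint (hconv i) (hsub i C hC) (hB₀G i)).1⟩
    · obtain rfl | hij := eq_or_ne i j
      · exact ⟨(hQ i).2.1 C hC C' hC' hne, noCrossing_iff.1 (hQ i).2.2.2 C hC C' hC' hne⟩
      · have hC'G : Disjoint C' (G i) := (hG hij).symm.mono_left (hsub j C' hC')
        exact ⟨(hC'G.mono_right (hsub i C hC)).symm,
          (not_interleaved_of_subset_of_disjoint (hconv i) (hsub i C hC) hC'G).1⟩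
  refine ⟨?_, fun C hC C' hC' hne => (separated C hC C' hC' hne).1, ?_,
    noCrossing_iff.2 fun C hC C' hC' hne => (separated C hC C' hC' hne).2⟩
  · simp only [mem_insert, mem_biUnion, mem_univ, true_and, not_or, not_exists]
    exact ⟨fun h => hB₀.ne_empty h.symm, fun i => (hQ i).1⟩
  · have hsup : ∀ i, (Q i).sup id = G i := fun i => (hQ i).2.2.1
    simp only [sup_insert, sup_biUnion, hsup, sup_eq_biUnion, id, sup_eq_union]

lemma prod_insert_biUnion {M : Type*} [CommMonoid M] (f : Finset ℕ → M) :
    ∏ B ∈ insert B₀ (univ.biUnion Q), f B = f B₀ * ∏ i, ∏ B ∈ Q i, f B := by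
  have hB₀Q : B₀ ∉ univ.biUnion Q := by
    simp only [mem_biUnion, mem_univ, true_and, not_exists]
    intro i hi
    obtain ⟨x, hx⟩ := hB₀
    exact disjoint_left.1 (hB₀G i) hx ((hQ i).subset_of_mem hi hx)
  have hQdisj : (Set.univ : Set ι).PairwiseDisjoint Q := by
    intro i _ j _ hij
    refine disjoint_left.2 fun C hi hj => ?_
    obtain ⟨x, hx⟩ := (hQ i).nonempty_of_mem hi
    exact disjoint_left.1 (hG hij) ((hQ i).subset_of_mem hi hx) ((hQ j).subset_of_mem hj hx)
  rw [prod_insert hB₀Q, prod_biUnion (by simpa using hQdisj)]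

lemma filter_insert_biUnion (i : ι) : (insert B₀ (univ.biUnion Q)).filter (· ⊆ G i) = Q i := by
  ext C
  simp only [mem_filter, mem_insert, mem_biUnion, mem_univ, true_and]
  constructor
  · rintro ⟨rfl | ⟨j, hC⟩, hCG⟩
    · obtain ⟨x, hx⟩ := hB₀
      exact absurd (hCG hx) (disjoint_left.1 (hB₀G i) hx)
    · obtain rfl | hij := eq_or_ne j i
      · exact hC
      · obtain ⟨x, hx⟩ := (hQ j).nonempty_of_mem hC
        exact absurd (hCG hx) (disjoint_left.1 (hG hij) ((hQ j).subset_of_mem hC hx))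
  · exact fun hC => ⟨Or.inr ⟨i, hC⟩, (hQ i).subset_of_mem hC⟩

end Glue

def gap (b : ℕ → ℕ) (j : ℕ) : Finset ℕ := Ioo (b j) (b (j + 1))

lemma ordConnected_gap (b : ℕ → ℕ) (j : ℕ) : (gap b j : Set ℕ).OrdConnected := by
  rw [gap, coe_Ioo]; exact Set.ordConnected_Ioo

lemma exists_mem_gap {b : ℕ → ℕ} {s x : ℕ} (h0 : b 0 ≤ x) (hs : x < b s)
    (hx : x ∉ (range s).image b) :
    ∃ j < s, x ∈ gap b j := by
  induction s with
  | zero => omega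
  | succ s ih =>
    by_cases hxs : x < b s
    · obtain ⟨j, hj, hxj⟩ :=
        ih hxs fun h => hx (image_subset_image (range_subset_range.2 s.le_succ) h)
      exact ⟨j, by omega, hxj⟩
    · have : x ≠ b s := fun h => hx (mem_image.2 ⟨s, self_mem_range_succ s, h.symm⟩)
      exact ⟨s, by omega, mem_Ioo.2 ⟨by omega, hs⟩⟩

section StrictMono

variable {b : ℕ → ℕ} (hb : StrictMono b)
include hb

lemma disjoint_image_gap (S : Finset ℕ) (j : ℕ) : Disjoint (S.image b) (gap b j) := by
  refine disjoint_left.2 fun x hx hxj => ?_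
  obtain ⟨i, -, rfl⟩ := mem_image.1 hx
  rw [gap, mem_Ioo, hb.lt_iff_lt, hb.lt_iff_lt] at hxj
  omega

lemma disjoint_gap {i j : ℕ} (hij : i ≠ j) : Disjoint (gap b i) (gap b j) := by
  refine disjoint_left.2 fun x hi hj => ?_
  simp only [gap, mem_Ioo] at hi hj
  rcases hij.lt_or_gt with h | h
  · have := hb.monotone (show i + 1 ≤ j from h); omega
  · have := hb.monotone (show j + 1 ≤ i from h); omega

lemma image_union_biUnion_gap (h0 : b 0 = 0) (s : ℕ) :
    (range s).image b ∪ univ.biUnion (fun j : Fin s => gap b j) = range (b s) := by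
  ext x
  by_cases hx : x ∈ (range s).image b
  · obtain ⟨i, hi, rfl⟩ := mem_image.1 hx
    simpa [hx] using hb (mem_range.1 hi)
  · simp only [mem_union, hx, false_or, mem_biUnion, mem_univ, true_and, mem_range]
    constructor
    · rintro ⟨j, hj⟩
      exact (mem_Ioo.1 hj).2.trans_le (hb.monotone j.isLt)
    · intro hxs
      obtain ⟨j, hj, hxj⟩ := exists_mem_gap (h0.symm ▸ x.zero_le) hxs hx
      exact ⟨⟨j, hj⟩, hxj⟩

lemma apply_eq_of_image_range_eq {b' : ℕ → ℕ} (hb' : StrictMono b') {s : ℕ}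
    (h : (range s).image b = (range s).image b') {i : ℕ} (hi : i < s) : b i = b' i := by
  have hcard : ((range s).image b).card = s := by
    rw [card_image_of_injective _ hb.injective, card_range]
  have e := orderEmbOfFin_unique hcard (f := fun i : Fin s => b i)
    (fun i => mem_image_of_mem _ (mem_range.2 i.isLt)) fun _ _ h => hb h
  have e' := orderEmbOfFin_unique hcard (f := fun i : Fin s => b' i)
    (fun i => h ▸ mem_image_of_mem _ (mem_range.2 i.isLt)) fun _ _ h => hb' h
  exact congrFun (e.trans e'.symm) ⟨i, hi⟩

end StrictMono

section Boundary

variable {s : ℕ} (t : Fin s → ℕ)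

/-- `boundary t j = j + t₀ + ⋯ + t_{j-1}`: the `j`-th element of the block of `0` when the gaps
between consecutive elements have sizes `t₀, t₁, …`. -/
def boundary (j : ℕ) : ℕ := j + ∑ i ∈ range j, if h : i < s then t ⟨i, h⟩ else 0

lemma boundary_zero : boundary t 0 = 0 := by simp [boundary]

lemma boundary_succ (j : Fin s) : boundary t (j + 1) = boundary t j + t j + 1 := by
  simp [boundary, sum_range_succ]; ring

lemma boundary_strictMono : StrictMono (boundary t) :=
  strictMono_nat_of_lt_succ fun j => by simp only [boundary, sum_range_succ]; omega

lemma boundary_last : boundary t s = s + ∑ j, t j := by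
  rw [boundary, ← Fin.sum_univ_eq_sum_range]
  simp

lemma gap_boundary (j : Fin s) :
    gap (boundary t) j = Ioo (boundary t j) (boundary t j + t j + 1) := by
  rw [gap, boundary_succ]

end Boundary

lemma boundary_sub_sub_one {b : ℕ → ℕ} (hb : StrictMono b) (h0 : b 0 = 0) {s i : ℕ} (hi : i ≤ s) :
    boundary (fun j : Fin s => b (j + 1) - b j - 1) i = b i := by
  induction i with
  | zero => rw [boundary_zero, h0]
  | succ i ih =>
    have := hb (show i < i + 1 by omega)
    have := boundary_succ (fun j : Fin s => b (j + 1) - b j - 1) ⟨i, hi⟩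
    simp only at this
    rw [this, ih (by omega)]
    omega

section Assemble

variable {s : ℕ} (t : Fin s → ℕ) (p : Fin s → PartData)

def assemble : PartData :=
  insert ((range s).image (boundary t))
    (univ.biUnion fun j : Fin s => shift (boundary t j + 1) (p j))

variable {t p}

lemma zero_mem_image_boundary (hs : 1 ≤ s) : 0 ∈ (range s).image (boundary t) :=
  mem_image.2 ⟨0, mem_range.2 hs, boundary_zero t⟩

lemma isNCPOn_shift_gap_boundary (hp : ∀ j, IsNCP (t j) (p j)) (j : Fin s) :
    IsNCPOn (gap (boundary t) j) (shift (boundary t j + 1) (p j)) := by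
  rw [gap_boundary]; exact isNCPOn_shift_iff.2 (hp j)

variable (hs : 1 ≤ s) (hp : ∀ j, IsNCP (t j) (p j))
include hs hp

lemma isNCP_assemble {n : ℕ} (ht : s + ∑ j, t j = n) : IsNCP n (assemble t p) := by
  have hb := boundary_strictMono t
  show IsNCPOn (range n) _
  rw [← ht, ← boundary_last, ← image_union_biUnion_gap hb (boundary_zero t)]
  exact isNCPOn_insert_biUnion ⟨0, zero_mem_image_boundary hs⟩
    (isNCPOn_shift_gap_boundary hp) (fun j => disjoint_image_gap hb _ _)
    (fun i j hij => disjoint_gap hb (Fin.val_injective.ne hij)) fun j => ordConnected_gap _ _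

lemma prod_assemble {M : Type*} [CommMonoid M] (f : ℕ → M) :
    ∏ B ∈ assemble t p, f B.card = f s * ∏ j, ∏ B ∈ p j, f B.card := by
  have hb := boundary_strictMono t
  rw [assemble, prod_insert_biUnion ⟨0, zero_mem_image_boundary hs⟩
    (isNCPOn_shift_gap_boundary hp) (fun j => disjoint_image_gap hb _ _)
    (fun i j hij => disjoint_gap hb (Fin.val_injective.ne hij)) (fun B => f B.card),
    card_image_of_injective _ hb.injective, card_range]
  refine congrArg _ (prod_congr rfl fun j _ => ?_)
  rw [shift, prod_image fun B _ B' _ h => image_injective (add_left_injective _) h]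
  exact prod_congr rfl fun B _ => by rw [card_image_of_injective _ (add_left_injective _)]

lemma filter_assemble (j : Fin s) :
    (assemble t p).filter (· ⊆ gap (boundary t) j) = shift (boundary t j + 1) (p j) := by
  have hb := boundary_strictMono t
  exact filter_insert_biUnion ⟨0, zero_mem_image_boundary hs⟩
    (isNCPOn_shift_gap_boundary hp) (fun j => disjoint_image_gap hb _ _)
    (fun i j hij => disjoint_gap hb (Fin.val_injective.ne hij)) j

end Assemble

def zeroBlock (P : PartData) : Finset ℕ := (P.filter (0 ∈ ·)).sup id

lemma IsNCPOn.zeroBlock_eq {S : Finset ℕ} {P : PartData} (hP : IsNCPOn S P) {B : Finset ℕ}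
    (hB : B ∈ P) (h0 : 0 ∈ B) : zeroBlock P = B := by
  have : P.filter (0 ∈ ·) = {B} := by
    refine eq_singleton_iff_unique_mem.2 ⟨mem_filter.2 ⟨hB, h0⟩, fun C hC => ?_⟩
    obtain ⟨hC, hC0⟩ := mem_filter.1 hC
    by_contra hne
    exact disjoint_left.1 (hP.2.1 C hC B hB hne) hC0 h0
  rw [zeroBlock, this, sup_singleton, id]

lemma IsNCPOn.zeroBlock_mem {S : Finset ℕ} {P : PartData} (hP : IsNCPOn S P) (h0 : 0 ∈ S) :
    zeroBlock P ∈ P ∧ 0 ∈ zeroBlock P := by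
  obtain ⟨B, hB, hB0⟩ := mem_sup.1 (hP.2.2.1.symm ▸ h0 : 0 ∈ P.sup id)
  rw [hP.zeroBlock_eq hB hB0]
  exact ⟨hB, hB0⟩

/-- The elements of the block of `0` in increasing order, continued by `n, n + 1, …` so that
`pivot n P` is strictly monotone when that block lies in `range n`. -/
def pivot (n : ℕ) (P : PartData) (i : ℕ) : ℕ :=
  if h : i < (zeroBlock P).card then (zeroBlock P).orderEmbOfFin rfl ⟨i, h⟩
  else n + (i - (zeroBlock P).card)

section Pivot

variable {n : ℕ} {P : PartData}

lemma pivot_strictMono (h : zeroBlock P ⊆ range n) : StrictMono (pivot n P) := by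
  intro i j hij
  have hlt : ∀ i (hi : i < (zeroBlock P).card), (zeroBlock P).orderEmbOfFin rfl ⟨i, hi⟩ < n :=
    fun i hi => mem_range.1 (h (orderEmbOfFin_mem _ rfl _))
  unfold pivot
  split_ifs with hi hj hj
  · exact ((zeroBlock P).orderEmbOfFin rfl).strictMono (Fin.mk_lt_mk.2 hij)
  · exact (hlt i hi).trans_le (Nat.le_add_right _ _)
  · omega
  · omega

lemma image_pivot {s : ℕ} (hs : (zeroBlock P).card = s) :
    (range s).image (pivot n P) = zeroBlock P := by
  subst hs
  ext x
  simp only [mem_image, mem_range]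
  constructor
  · rintro ⟨i, hi, rfl⟩
    rw [pivot, dif_pos hi]
    exact orderEmbOfFin_mem _ rfl _
  · intro hx
    obtain ⟨⟨i, hi⟩, rfl⟩ : x ∈ Set.range ((zeroBlock P).orderEmbOfFin rfl) := by
      rwa [range_orderEmbOfFin]
    exact ⟨i, hi, by rw [pivot, dif_pos hi]⟩

lemma pivot_card {s : ℕ} (hs : (zeroBlock P).card = s) : pivot n P s = n := by
  simp [pivot, hs]

end Pivot

def gapSizes (n : ℕ) (P : PartData) (s : ℕ) (j : Fin s) : ℕ :=
  pivot n P (j + 1) - pivot n P j - 1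

def gapParts (n : ℕ) (P : PartData) (s : ℕ) (j : Fin s) : PartData :=
  (P.filter (· ⊆ gap (pivot n P) j)).image (image (· - (pivot n P j + 1)))

section Decompose

variable {n : ℕ} {P : PartData} (hP : IsNCPOn (range n) P) (hn : 1 ≤ n)
include hP hn

lemma pivot_strictMono_of_isNCPOn : StrictMono (pivot n P) :=
  pivot_strictMono (hP.subset_of_mem (hP.zeroBlock_mem (mem_range.2 hn)).1)

lemma pivot_zero : pivot n P 0 = 0 := by
  have h0 := (hP.zeroBlock_mem (mem_range.2 hn)).2
  rw [← image_pivot (n := n) rfl] at h0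
  obtain ⟨i, -, hi⟩ := mem_image.1 h0
  have := (pivot_strictMono_of_isNCPOn hP hn).monotone i.zero_le
  omega

lemma exists_subset_gap {B : Finset ℕ} (hB : B ∈ P) (hne : B ≠ zeroBlock P) :
    ∃ j : Fin (zeroBlock P).card, B ⊆ gap (pivot n P) j := by
  obtain ⟨hZ, hZ0⟩ := hP.zeroBlock_mem (mem_range.2 hn)
  have hdisj : Disjoint B (zeroBlock P) := hP.2.1 _ hB _ hZ hne
  have hBne := hP.nonempty_of_mem hB
  have hx₀ : B.min' hBne ∈ B := B.min'_mem hBne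
  have hx₀Z : B.min' hBne ∉ zeroBlock P := disjoint_left.1 hdisj hx₀
  have hbn : ∀ x ∈ B, x < pivot n P (zeroBlock P).card := fun x hx => by
    rw [pivot_card rfl]; exact mem_range.1 (hP.subset_of_mem hB hx)
  obtain ⟨j, hj, hx₀j⟩ := exists_mem_gap (by rw [pivot_zero hP hn]; exact Nat.zero_le _)
    (hbn _ hx₀) (by rwa [image_pivot rfl])
  refine ⟨⟨j, hj⟩, fun x hx => mem_Ioo.2 ⟨(mem_Ioo.1 hx₀j).1.trans_le (B.min'_le x hx), ?_⟩⟩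
  -- otherwise `0 < min B < pivot (j + 1) < x` makes `B` cross the block of `0`
  by_contra! hge
  have hj1 : j + 1 < (zeroBlock P).card := by
    by_contra!
    have := hbn x hx
    rw [show j + 1 = (zeroBlock P).card by omega] at hge
    omega
  have hbZ : pivot n P (j + 1) ∈ zeroBlock P :=
    image_pivot rfl ▸ mem_image_of_mem _ (mem_range.2 hj1)
  have hlt : pivot n P (j + 1) < x :=
    lt_of_le_of_ne hge fun h => disjoint_left.1 hdisj hx (h ▸ hbZ)
  have hpos : 0 < B.min' hBne := Nat.pos_of_ne_zero fun h => hx₀Z (h ▸ hZ0)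
  exact noCrossing_iff.1 hP.2.2.2 _ hZ _ hB (Ne.symm hne)
    ⟨0, hZ0, _, hbZ, _, hx₀, x, hx, hpos, (mem_Ioo.1 hx₀j).2, hlt⟩

lemma exists_mem_subset_gap (j : Fin (zeroBlock P).card) :
    ∀ x ∈ gap (pivot n P) j, ∃ B ∈ P, x ∈ B ∧ B ⊆ gap (pivot n P) j := by
  have hb := pivot_strictMono_of_isNCPOn hP hn
  intro x hx
  have hxn : x ∈ range n := by
    rw [← pivot_card (n := n) (P := P) rfl, ← image_union_biUnion_gap hb (pivot_zero hP hn)]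
    exact mem_union_right _ (mem_biUnion.2 ⟨j, mem_univ _, hx⟩)
  obtain ⟨B, hB, hxB⟩ := mem_sup.1 (hP.2.2.1.symm ▸ hxn : x ∈ P.sup id)
  have hne : B ≠ zeroBlock P := fun h =>
    disjoint_left.1 (disjoint_image_gap hb _ j) (image_pivot (n := n) rfl ▸ h ▸ hxB) hx
  obtain ⟨j', hj'⟩ := exists_subset_gap hP hn hB hne
  obtain rfl : j' = j := by
    by_contra h
    exact disjoint_left.1 (disjoint_gap hb (Fin.val_injective.ne h)) (hj' hxB) hx
  exact ⟨B, hB, hxB, hj'⟩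

lemma boundary_gapSizes {i : ℕ} (hi : i ≤ (zeroBlock P).card) :
    boundary (gapSizes n P (zeroBlock P).card) i = pivot n P i :=
  boundary_sub_sub_one (pivot_strictMono_of_isNCPOn hP hn) (pivot_zero hP hn) hi

lemma card_add_sum_gapSizes :
    (zeroBlock P).card + ∑ j, gapSizes n P (zeroBlock P).card j = n := by
  rw [← boundary_last, boundary_gapSizes hP hn le_rfl, pivot_card rfl]

omit hP hn in
lemma shift_gapParts {s : ℕ} (j : Fin s) :
    shift (pivot n P j + 1) (gapParts n P s j) = P.filter (· ⊆ gap (pivot n P) j) :=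
  shift_image_sub fun _ hB _ hx => (mem_Ioo.1 ((mem_filter.1 hB).2 hx)).1

lemma isNCP_gapParts (j : Fin (zeroBlock P).card) :
    IsNCP (gapSizes n P _ j) (gapParts n P _ j) := by
  have hend : pivot n P j + gapSizes n P _ j + 1 = pivot n P (j + 1) := by
    have := pivot_strictMono_of_isNCPOn hP hn (show (j : ℕ) < j + 1 by omega)
    unfold gapSizes; omega
  rw [← isNCPOn_shift_iff (a := pivot n P j), hend, shift_gapParts]
  exact hP.filter_subset _ (exists_mem_subset_gap hP hn j)

lemma assemble_gapSizes_gapParts :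
    assemble (gapSizes n P (zeroBlock P).card) (gapParts n P _) = P := by
  have hZ := (hP.zeroBlock_mem (mem_range.2 hn)).1
  have himage : (range (zeroBlock P).card).image (boundary (gapSizes n P (zeroBlock P).card))
      = zeroBlock P := by
    conv_rhs => rw [← image_pivot (n := n) rfl]
    exact image_congr fun i hi => boundary_gapSizes hP hn (mem_range.1 hi).le
  have hshift : ∀ j : Fin (zeroBlock P).card,
      shift (boundary (gapSizes n P (zeroBlock P).card) j + 1) (gapParts n P _ j)
        = P.filter (· ⊆ gap (pivot n P) j) := fun j => by
    rw [boundary_gapSizes hP hn j.isLt.le, shift_gapParts]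
  ext C
  simp only [assemble, himage, hshift, mem_insert, mem_biUnion, mem_univ, true_and, mem_filter]
  constructor
  · rintro (rfl | ⟨j, hC, -⟩)
    exacts [hZ, hC]
  · intro hC
    by_cases hCZ : C = zeroBlock P
    · exact Or.inl hCZ
    · obtain ⟨j, hj⟩ := exists_subset_gap hP hn hC hCZ
      exact Or.inr ⟨j, hC, hj⟩

end Decompose

section Reassemble

variable {n s : ℕ} {t : Fin s → ℕ} {p : Fin s → PartData}
  (hs : 1 ≤ s) (hp : ∀ j, IsNCP (t j) (p j)) (ht : s + ∑ j, t j = n)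
include hs hp ht

lemma zeroBlock_assemble : zeroBlock (assemble t p) = (range s).image (boundary t) :=
  IsNCPOn.zeroBlock_eq (S := range n) (isNCP_assemble hs hp ht) (mem_insert_self _ _)
    (zero_mem_image_boundary hs)

lemma card_zeroBlock_assemble : (zeroBlock (assemble t p)).card = s := by
  rw [zeroBlock_assemble hs hp ht, card_image_of_injective _ (boundary_strictMono t).injective,
    card_range]

lemma pivot_assemble {i : ℕ} (hi : i ≤ s) : pivot n (assemble t p) i = boundary t i := by
  have hA := isNCP_assemble hs hp ht
  obtain hi | rfl := hi.lt_or_eq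
  · refine apply_eq_of_image_range_eq (pivot_strictMono_of_isNCPOn hA (by omega))
      (boundary_strictMono t) ?_ hi
    rw [image_pivot (card_zeroBlock_assemble hs hp ht), zeroBlock_assemble hs hp ht]
  · rw [pivot_card (card_zeroBlock_assemble hs hp ht), boundary_last, ht]

lemma gapSizes_assemble : gapSizes n (assemble t p) s = t := by
  funext j
  rw [gapSizes, pivot_assemble hs hp ht j.isLt, pivot_assemble hs hp ht j.isLt.le, boundary_succ]
  omega

lemma gapParts_assemble : gapParts n (assemble t p) s = p := by
  funext j
  have hgap : gap (pivot n (assemble t p)) j = gap (boundary t) j := by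
    rw [gap, gap, pivot_assemble hs hp ht j.isLt.le, pivot_assemble hs hp ht j.isLt]
  rw [gapParts, hgap, filter_assemble hs hp, pivot_assemble hs hp ht j.isLt.le, image_sub_shift]

end Reassemble

lemma sum_filter_card_zeroBlock_eq {R : Type*} [CommSemiring R] (k : ℕ → R) {n s : ℕ}
    (hs : 1 ≤ s) (hsn : s ≤ n) :
    ∑ P ∈ (NCset n).filter (fun P => (zeroBlock P).card = s), ∏ B ∈ P, k B.card =
      ∑ t ∈ Finset.Nat.antidiagonalTuple s (n - s),
        k s * ∏ j, ∑ P ∈ NCset (t j), ∏ B ∈ P, k B.card := by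
  have hn : 1 ≤ n := hs.trans hsn
  simp_rw [prod_univ_sum, mul_sum]
  rw [sum_sigma']
  have hfiber {P : PartData} : P ∈ (NCset n).filter (fun P => (zeroBlock P).card = s) ↔
      IsNCPOn (range n) P ∧ (zeroBlock P).card = s := by rw [mem_filter, mem_NCset]; rfl
  have hsigma {x : (_ : Fin s → ℕ) × (Fin s → PartData)} :
      x ∈ (Finset.Nat.antidiagonalTuple s (n - s)).sigma
          (fun t => Fintype.piFinset fun j => NCset (t j))
        ↔ s + ∑ j, x.1 j = n ∧ ∀ j, IsNCP (x.1 j) (x.2 j) := by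
    simp only [mem_sigma, Finset.Nat.mem_antidiagonalTuple, Fintype.mem_piFinset, mem_NCset]
    exact and_congr_left' (by omega)
  refine sum_nbij' (fun P => ⟨gapSizes n P s, gapParts n P s⟩) (fun x => assemble x.1 x.2)
    ?_ ?_ ?_ ?_ ?_
  · rintro P hP
    obtain ⟨hPn, rfl⟩ := hfiber.1 hP
    exact hsigma.2 ⟨card_add_sum_gapSizes hPn hn, isNCP_gapParts hPn hn⟩
  · rintro ⟨t, p⟩ hx
    obtain ⟨ht, hp⟩ := hsigma.1 hx
    exact hfiber.2 ⟨isNCP_assemble hs hp ht, card_zeroBlock_assemble hs hp ht⟩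
  · rintro P hP
    obtain ⟨hPn, rfl⟩ := hfiber.1 hP
    exact assemble_gapSizes_gapParts hPn hn
  · rintro ⟨t, p⟩ hx
    obtain ⟨ht, hp⟩ := hsigma.1 hx
    simp only [gapSizes_assemble hs hp ht, gapParts_assemble hs hp ht]
  · rintro P hP
    obtain ⟨hPn, rfl⟩ := hfiber.1 hP
    conv_lhs => rw [← assemble_gapSizes_gapParts hPn hn]
    exact prod_assemble hs (isNCP_gapParts hPn hn) k

theorem sum_NCset_eq {R : Type*} [CommSemiring R] (k : ℕ → R) {n : ℕ} (hn : 1 ≤ n) :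
    ∑ P ∈ NCset n, ∏ B ∈ P, k B.card =
      ∑ s ∈ Icc 1 n, ∑ t ∈ Finset.Nat.antidiagonalTuple s (n - s),
        k s * ∏ j, ∑ P ∈ NCset (t j), ∏ B ∈ P, k B.card := by
  have hcard : ∀ P ∈ NCset n, (zeroBlock P).card ∈ Icc 1 n := fun P hP => by
    have hP : IsNCPOn (range n) P := mem_NCset.1 hP
    obtain ⟨hZ, hZ0⟩ := hP.zeroBlock_mem (mem_range.2 hn)
    exact mem_Icc.2 ⟨card_pos.2 ⟨0, hZ0⟩, by simpa using card_le_card (hP.subset_of_mem hZ)⟩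
  rw [← sum_fiberwise_of_maps_to hcard]
  exact sum_congr rfl fun s hs =>
    sum_filter_card_zeroBlock_eq k (mem_Icc.1 hs).1 (mem_Icc.1 hs).2

end NonCrossing

/-- the free moment–cumulant relation.
If `m₀ = 1` and `mₙ = Σ_{s=1}^{n} Σ_{i₁+⋯+i_s = n-s} k_s m_{i₁} ⋯ m_{i_s}` for `n ≥ 1`,
then `mₙ = Σ_{L ∈ NC_n} Π_{B block of L} k_{|B|}` for all `n ≥ 1`. -/
theorem free_moment_cumulant_relation (K : Type*) [CommRing K] (k m : ℕ → K)
    (hm0 : m 0 = 1)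
    (hrec : ∀ n : ℕ, 1 ≤ n →
      m n = ∑ s ∈ Finset.Icc 1 n, ∑ t ∈ Finset.Nat.antidiagonalTuple s (n - s),
        k s * ∏ j, m (t j)) :
    ∀ n : ℕ, 1 ≤ n → m n = ∑ P ∈ NCset n, ∏ B ∈ P, k B.card := by
  intro n
  induction n using Nat.strong_induction_on with
  | _ n ih =>
    intro hn
    rw [hrec n hn, NonCrossing.sum_NCset_eq k hn]
    refine sum_congr rfl fun s hs => sum_congr rfl fun t ht =>
      congrArg _ (prod_congr rfl fun j _ => ?_)
    obtain h0 | hpos := Nat.eq_zero_or_pos (t j)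
    · rw [h0, hm0, NonCrossing.NCset_zero, sum_singleton, prod_empty]
    · have htj : t j ≤ n - s := Finset.Nat.mem_antidiagonalTuple.1 ht ▸
        single_le_sum (fun i _ => Nat.zero_le (t i)) (mem_univ j)
      exact ih (t j) (by have := (mem_Icc.1 hs).1; omega) hpos
end
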